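/- arXiv:math/0703637 — 5 statements merged into one kernel-verified Lean document; each statement's English description precedes it below -/
import Mathlib

section
/- Let w, v ∈ W^{P_d} with λ(w) ⊆ λ(v) = μ, and let C, C′ ⊆ D_μ be such that C′ is obtained from C by one elementary excitation. If C ∈ R_v(w), then C′ ∈ R_v(w). -/
/-! Type A setup: the symmetric group `S_n` realized inside `Equiv.Perm ℕ`. -/

/-- The simple transposition `s_i = (i, i+1)`. -/
def sA (i : ℕ) : Equiv.Perm ℕ := Equiv.swap i (i + 1)

/-- The product of the simple transpositions indexed by a word. -/
def wordProdA (l : List ℕ) : Equiv.Perm ℕ := (l.map sA).prod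

/-- The Coxeter length of `w ∈ S_n`. -/
noncomputable def lenA (n : ℕ) (w : Equiv.Perm ℕ) : ℕ :=
  sInf {k | ∃ l : List ℕ, l.length = k ∧ (∀ i ∈ l, 1 ≤ i ∧ i < n) ∧ wordProdA l = w}

/-- `w` is a Grassmannian permutation in `W^{P_d} ⊆ S_n`. -/
def IsGrassA (n d : ℕ) (w : Equiv.Perm ℕ) : Prop :=
  (∀ i, i = 0 ∨ n < i → w i = i) ∧
  (∀ i j, 1 ≤ i → i < j → j ≤ d → w i < w j) ∧
  (∀ i j, d < i → i < j → j ≤ n → w i < w j)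

/-- The partition `λ(w)` associated to `w ∈ W^{P_d}`. -/
def lamA (d : ℕ) (w : Equiv.Perm ℕ) : ℕ → ℕ :=
  fun j => if 1 ≤ j ∧ j ≤ d then w (d - j + 1) - (d - j + 1) else 0

/-- The Young diagram `D_λ = {(i,j) : 1 ≤ i ≤ d, 1 ≤ j ≤ λ_i}` as a `Finset`. -/
def YDA (d : ℕ) (l : ℕ → ℕ) : Finset (ℕ × ℕ) :=
  (Finset.Icc 1 d).biUnion fun i => (Finset.Icc 1 (l i)).image fun j => (i, j)

/-- Boxes of `D_μ` in row-reading order (bottom row to top, right to left). -/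
def rowBoxesA (d : ℕ) (l : ℕ → ℕ) : List (ℕ × ℕ) :=
  ((List.range d).reverse).flatMap fun i0 =>
    ((List.range (l (i0 + 1))).reverse).map fun j0 => (i0 + 1, j0 + 1)

/-- The subword permutation `w_C`: the product, in row-reading order, of the
simple reflections `s_{d-i+j}` over the boxes `(i,j) ∈ C`. -/
def subPermA (d : ℕ) (l : ℕ → ℕ) (C : Finset (ℕ × ℕ)) : Equiv.Perm ℕ :=
  (((rowBoxesA d l).filter fun p => decide (p ∈ C)).map fun p => sA (d - p.1 + p.2)).prod

/-- Elementary excitation inside the diagram `D`: a box `(i,j) ∈ C` with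
`(i+1,j), (i,j+1), (i+1,j+1) ∈ D \ C` is moved to `(i+1,j+1)`. -/
def ElemExcA (D C C' : Finset (ℕ × ℕ)) : Prop :=
  ∃ i j : ℕ, (i, j) ∈ C ∧
    (i + 1, j) ∈ D ∧ (i, j + 1) ∈ D ∧ (i + 1, j + 1) ∈ D ∧
    (i + 1, j) ∉ C ∧ (i, j + 1) ∉ C ∧ (i + 1, j + 1) ∉ C ∧
    C' = insert (i + 1, j + 1) (C.erase (i, j))

/-- `R_v(w)`: subsets `C ⊆ D_{λ(v)}` with `#C = ℓ(w)` and `w_C = w`. -/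
noncomputable def RSetA (n d : ℕ) (v w : Equiv.Perm ℕ) : Set (Finset (ℕ × ℕ)) :=
  {C | C ⊆ YDA d (lamA d v) ∧ C.card = lenA n w ∧ subPermA d (lamA d v) C = w}

lemma sA_commute {a b : ℕ} (h : a + 2 ≤ b) : Commute (sA a) (sA b) := by
  apply Equiv.Perm.Disjoint.commute
  intro x
  rcases eq_or_ne x a with rfl | hxa
  · right; exact Equiv.swap_apply_of_ne_of_ne (by omega) (by omega)
  rcases eq_or_ne x (a+1) with rfl | hxa1
  · right; exact Equiv.swap_apply_of_ne_of_ne (by omega) (by omega)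
  · left; exact Equiv.swap_apply_of_ne_of_ne hxa hxa1

def FP (d : ℕ) (S : Finset (ℕ × ℕ)) (L : List (ℕ × ℕ)) : Equiv.Perm ℕ :=
  ((L.filter fun p => decide (p ∈ S)).map fun p => sA (d - p.1 + p.2)).prod

lemma FP_append (d : ℕ) (S : Finset (ℕ × ℕ)) (L1 L2 : List (ℕ × ℕ)) :
    FP d S (L1 ++ L2) = FP d S L1 * FP d S L2 := by
  simp [FP]

lemma FP_cons (d : ℕ) (S : Finset (ℕ × ℕ)) (x : ℕ × ℕ) (L : List (ℕ × ℕ)) :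
    FP d S (x :: L) = (if x ∈ S then sA (d - x.1 + x.2) else 1) * FP d S L := by
  by_cases h : x ∈ S <;> simp [FP, List.filter_cons, h]

lemma FP_congr {d : ℕ} {S T : Finset (ℕ × ℕ)} {L : List (ℕ × ℕ)}
    (h : ∀ p ∈ L, (p ∈ S ↔ p ∈ T)) : FP d S L = FP d T L := by
  unfold FP
  congr 1
  congr 1
  exact List.filter_congr fun p hp => by simp [h p hp]

lemma FP_commute {d k : ℕ} {S : Finset (ℕ × ℕ)} {L : List (ℕ × ℕ)}
    (h : ∀ p ∈ L, p ∈ S → Commute (sA k) (sA (d - p.1 + p.2))) :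
    Commute (sA k) (FP d S L) := by
  apply Commute.list_prod_right
  intro x hx
  rw [List.mem_map] at hx
  obtain ⟨p, hp, rfl⟩ := hx
  rw [List.mem_filter] at hp
  exact h p hp.1 (by simpa using hp.2)

lemma subPerm_exc (d : ℕ) (l : ℕ → ℕ) (C : Finset (ℕ × ℕ)) (i j : ℕ)
    (hij : (i, j) ∈ C) (hi1 : 1 ≤ i) (hid : i + 1 ≤ d) (hj1 : 1 ≤ j)
    (hjA : j + 1 ≤ l (i + 1)) (hjB : j + 1 ≤ l i)
    (h1 : (i + 1, j) ∉ C) (h2 : (i, j + 1) ∉ C) (h3 : (i + 1, j + 1) ∉ C) :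
    subPermA d l (insert (i + 1, j + 1) (C.erase (i, j))) = subPermA d l C := by
  set C' := insert (i + 1, j + 1) (C.erase (i, j)) with hC'def
  have hC'eq : ∀ p : ℕ × ℕ, p ≠ (i, j) → p ≠ (i + 1, j + 1) → (p ∈ C' ↔ p ∈ C) := by
    intro p hp1 hp2
    simp [hC'def, Finset.mem_insert, Finset.mem_erase, hp1, hp2]
  -- segments
  set A := (((List.range (d - (i+1))).map (fun t => (i+1) + t)).reverse).flatMap
        (fun i0 => ((List.range (l (i0+1))).reverse).map (fun j0 => (i0+1, j0+1))) with hAdef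
  set B := (((List.range (i-1)).reverse).flatMap
        (fun i0 => ((List.range (l (i0+1))).reverse).map (fun j0 => (i0+1, j0+1)))) with hBdef
  set P1 := ((((List.range (l (i+1) - (j+1))).map (fun t => (j+1) + t)).reverse).map
        (fun j0 => ((i:ℕ)+1, j0+1))) with hP1def
  set P2 := (((List.range j).reverse).map (fun j0 => ((i:ℕ)+1, j0+1))) with hP2def
  set Q1 := ((((List.range (l i - j)).map (fun t => j + t)).reverse).map (fun j0 => (i, j0+1))) with hQ1def
  set Q2 := (((List.range (j-1)).reverse).map (fun j0 => (i, j0+1))) with hQ2def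
  have hdec : rowBoxesA d l =
      A ++ ((P1 ++ (i+1, j+1) :: P2) ++ ((Q1 ++ (i, j) :: Q2) ++ B)) := by
    have hrange : (List.range d).reverse
        = ((List.range (d - (i + 1))).map (fun t => (i + 1) + t)).reverse
          ++ i :: (i - 1) :: (List.range (i - 1)).reverse := by
      have e1 : List.range d = List.range (i + 1) ++ (List.range (d - (i + 1))).map (fun t => (i + 1) + t) := by
        conv_lhs => rw [show d = (i + 1) + (d - (i + 1)) by omega]
        exact List.range_add
      have e2 : List.range (i + 1) = List.range (i - 1) ++ [i - 1, i] := by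
        rw [show i + 1 = (i - 1) + 2 by omega, List.range_add]
        simp [List.range_succ, show i - 1 + 1 = i by omega]
      rw [e1, e2]
      simp
    have hfi : ((List.range (l (i+1))).reverse).map (fun j0 => ((i:ℕ)+1, j0+1))
        = P1 ++ (i+1, j+1) :: P2 := by
      rw [hP1def, hP2def]
      have e1 : List.range (l (i+1)) = List.range (j+1) ++ (List.range (l (i+1) - (j+1))).map (fun t => (j+1) + t) := by
        conv_lhs => rw [show l (i+1) = (j+1) + (l (i+1) - (j+1)) by omega]
        exact List.range_add
      rw [e1, List.reverse_append, List.map_append, List.range_succ]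
      simp
    have hfi' : ((List.range (l (i-1+1))).reverse).map (fun j0 => (i-1+1, j0+1))
        = Q1 ++ (i, j) :: Q2 := by
      rw [hQ1def, hQ2def, show i - 1 + 1 = i by omega]
      have e1 : List.range (l i) = List.range j ++ (List.range (l i - j)).map (fun t => j + t) := by
        conv_lhs => rw [show l i = j + (l i - j) by omega]
        exact List.range_add
      have e2 : List.range j = List.range (j-1) ++ [j-1] := by
        rw [show j = (j-1) + 1 by omega, List.range_succ]
        simp [show j - 1 + 1 = j by omega]
      rw [e1, e2, List.reverse_append, List.reverse_append, List.map_append, List.map_append]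
      simp [show j - 1 + 1 = j by omega]
    unfold rowBoxesA
    rw [hrange, List.flatMap_append, List.flatMap_cons, List.flatMap_cons]
    rw [hfi, hfi', hAdef, hBdef]
  -- membership characterizations
  have hA : ∀ p ∈ A, i + 2 ≤ p.1 := by
    intro p hp
    rw [hAdef, List.mem_flatMap] at hp
    obtain ⟨i0, hi0, hpf⟩ := hp
    rw [List.mem_reverse, List.mem_map] at hi0
    obtain ⟨t, ht, rfl⟩ := hi0
    rw [List.mem_map] at hpf
    obtain ⟨j0, hj0, rfl⟩ := hpf
    simp <;> omega
  have hB : ∀ p ∈ B, p.1 + 1 ≤ i := by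
    intro p hp
    rw [hBdef, List.mem_flatMap] at hp
    obtain ⟨i0, hi0, hpf⟩ := hp
    rw [List.mem_reverse, List.mem_range] at hi0
    rw [List.mem_map] at hpf
    obtain ⟨j0, hj0, rfl⟩ := hpf
    simp <;> omega
  have hP1 : ∀ p ∈ P1, p.1 = i + 1 ∧ j + 2 ≤ p.2 := by
    intro p hp
    rw [hP1def, List.mem_map] at hp
    obtain ⟨j0, hj0, rfl⟩ := hp
    rw [List.mem_reverse, List.mem_map] at hj0
    obtain ⟨t, ht, rfl⟩ := hj0
    simp <;> omega
  have hP2 : ∀ p ∈ P2, p.1 = i + 1 ∧ 1 ≤ p.2 ∧ p.2 ≤ j := by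
    intro p hp
    rw [hP2def, List.mem_map] at hp
    obtain ⟨j0, hj0, rfl⟩ := hp
    rw [List.mem_reverse, List.mem_range] at hj0
    simp <;> omega
  have hQ1 : ∀ p ∈ Q1, p.1 = i ∧ j + 1 ≤ p.2 := by
    intro p hp
    rw [hQ1def, List.mem_map] at hp
    obtain ⟨j0, hj0, rfl⟩ := hp
    rw [List.mem_reverse, List.mem_map] at hj0
    obtain ⟨t, ht, rfl⟩ := hj0
    simp <;> omega
  have hQ2 : ∀ p ∈ Q2, p.1 = i ∧ p.2 + 1 ≤ j := by
    intro p hp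
    rw [hQ2def, List.mem_map] at hp
    obtain ⟨j0, hj0, rfl⟩ := hp
    rw [List.mem_reverse, List.mem_range] at hj0
    simp <;> omega
  -- FP congruence on all six segments
  have congA : FP d C' A = FP d C A := FP_congr fun p hp =>
    hC'eq p (fun h => by have := hA p hp; rw [h] at this; simp at this <;> omega)
            (fun h => by have := hA p hp; rw [h] at this; simp at this <;> omega)
  have congB : FP d C' B = FP d C B := FP_congr fun p hp =>
    hC'eq p (fun h => by have := hB p hp; rw [h] at this; simp at this <;> omega)
            (fun h => by have := hB p hp; rw [h] at this; simp at this <;> omega)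
  have congP1 : FP d C' P1 = FP d C P1 := FP_congr fun p hp =>
    hC'eq p (fun h => by have := hP1 p hp; rw [h] at this; simp at this <;> omega)
            (fun h => by have := hP1 p hp; rw [h] at this; simp at this <;> omega)
  have congP2 : FP d C' P2 = FP d C P2 := FP_congr fun p hp =>
    hC'eq p (fun h => by have := hP2 p hp; rw [h] at this; simp at this <;> omega)
            (fun h => by have := hP2 p hp; rw [h] at this; simp at this <;> omega)
  have congQ1 : FP d C' Q1 = FP d C Q1 := FP_congr fun p hp =>
    hC'eq p (fun h => by have := hQ1 p hp; rw [h] at this; simp at this <;> omega)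
            (fun h => by have := hQ1 p hp; rw [h] at this; simp at this <;> omega)
  have congQ2 : FP d C' Q2 = FP d C Q2 := FP_congr fun p hp =>
    hC'eq p (fun h => by have := hQ2 p hp; rw [h] at this; simp at this <;> omega)
            (fun h => by have := hQ2 p hp; rw [h] at this; simp at this <;> omega)
  -- commuting of the moved reflection with the middle segments
  have hcP2 : Commute (sA (d - i + j)) (FP d C P2) := by
    apply FP_commute
    intro p hp hpc
    obtain ⟨hp1, hp2a, hp2b⟩ := hP2 p hp
    have hne : p ≠ (i + 1, j) := fun h => h1 (h ▸ hpc)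
    have hlt : p.2 + 1 ≤ j := by
      rcases eq_or_ne p.2 j with he | hne2
      · exact absurd (Prod.ext hp1 he) hne
      · omega
    exact (sA_commute (by omega : (d - p.1 + p.2) + 2 ≤ d - i + j)).symm
  have hcQ1 : Commute (sA (d - i + j)) (FP d C Q1) := by
    apply FP_commute
    intro p hp hpc
    obtain ⟨hp1, hp2⟩ := hQ1 p hp
    have hne : p ≠ (i, j + 1) := fun h => h2 (h ▸ hpc)
    have hlt : j + 2 ≤ p.2 := by
      rcases eq_or_ne p.2 (j + 1) with he | hne2
      · exact absurd (Prod.ext hp1 he) hne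
      · omega
    exact sA_commute (by omega : (d - i + j) + 2 ≤ d - p.1 + p.2)
  -- membership of the two special boxes
  have hm1 : (i + 1, j + 1) ∈ C' := Finset.mem_insert_self _ _
  have hm2 : (i, j) ∉ C' := by
    simp [hC'def, Finset.mem_insert, Finset.mem_erase]
  -- assemble
  show FP d C' (rowBoxesA d l) = FP d C (rowBoxesA d l)
  rw [hdec]
  simp only [FP_append, FP_cons]
  rw [if_pos hm1, if_neg hm2, if_neg h3, if_pos hij]
  rw [congA, congB, congP1, congP2, congQ1, congQ2]
  rw [show d - (i + 1) + (j + 1) = d - i + j by omega, one_mul, one_mul]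
  simp only [mul_assoc]
  rw [← mul_assoc (sA (d - i + j)), hcP2.eq, mul_assoc]
  rw [← mul_assoc (sA (d - i + j)) (FP d C Q1), hcQ1.eq, mul_assoc]

lemma mem_YDA {d : ℕ} {l : ℕ → ℕ} {p : ℕ × ℕ} :
    p ∈ YDA d l ↔ 1 ≤ p.1 ∧ p.1 ≤ d ∧ 1 ≤ p.2 ∧ p.2 ≤ l p.1 := by
  obtain ⟨a, b⟩ := p
  simp only [YDA, Finset.mem_biUnion, Finset.mem_image, Finset.mem_Icc, Prod.mk.injEq]
  constructor
  · rintro ⟨i, hi, j, hj, rfl, rfl⟩; exact ⟨hi.1, hi.2, hj.1, hj.2⟩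
  · rintro ⟨h1, h2, h3, h4⟩; exact ⟨a, ⟨h1, h2⟩, b, ⟨h3, h4⟩, rfl, rfl⟩

/-- `R_v(w)` is stable under elementary excitations. -/
theorem stmt1 (n d : ℕ) (hd : 1 ≤ d) (hdn : d ≤ n) (w v : Equiv.Perm ℕ)
    (hw : IsGrassA n d w) (hv : IsGrassA n d v)
    (hsub : ∀ j, lamA d w j ≤ lamA d v j)
    (C C' : Finset (ℕ × ℕ))
    (hexc : ElemExcA (YDA d (lamA d v)) C C')
    (hC : C ∈ RSetA n d v w) :
    C' ∈ RSetA n d v w := by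
  obtain ⟨hCsub, hCcard, hCperm⟩ := hC
  obtain ⟨i, j, hij, hD1, hD2, hD3, h1, h2, h3, hCpd⟩ := hexc
  have hijD := mem_YDA.mp (hCsub hij)
  have hb1 := mem_YDA.mp hD1
  have hb2 := mem_YDA.mp hD2
  have hb3 := mem_YDA.mp hD3
  subst hCpd
  refine ⟨?_, ?_, ?_⟩
  · intro p hp
    rcases Finset.mem_insert.mp hp with rfl | hp'
    · exact hD3
    · exact hCsub (Finset.mem_of_mem_erase hp')
  · have hnm : (i + 1, j + 1) ∉ C.erase (i, j) := fun hmem => h3 (Finset.mem_of_mem_erase hmem)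
    rw [Finset.card_insert_of_notMem hnm, Finset.card_erase_of_mem hij]
    have : 1 ≤ C.card := Finset.card_pos.mpr ⟨_, hij⟩
    omega
  · rw [← hCperm]
    exact subPerm_exc d (lamA d v) C i j hij hijD.1 hb1.2.1 hijD.2.2.1
      hb3.2.2.2 hb2.2.2.2 h1 h2 h3
end

section
/- Let w, v ∈ W^{P_d} with λ = λ(w) ⊆ μ = λ(v), and let C ∈ R_v(w) with C ≠ D_λ. Then there exists C′ ∈ R_v(w) with C′ ≠ C such that C is obtained from C′ by a sequence of elementary excitations. -/
/-! ### basic sA lemmas -/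

lemma sA_self (k : ℕ) : sA k k = k + 1 := Equiv.swap_apply_left _ _
lemma sA_succ (k : ℕ) : sA k (k+1) = k := Equiv.swap_apply_right _ _
lemma sA_other {k m : ℕ} (h1 : m ≠ k) (h2 : m ≠ k + 1) : sA k m = m :=
  Equiv.swap_apply_of_ne_of_ne h1 h2

lemma sA_lt {k m : ℕ} (h : m < k) : sA k m = m := sA_other (by omega) (by omega)
lemma sA_gt {k m : ℕ} (h : k + 1 < m) : sA k m = m := sA_other (by omega) (by omega)

lemma sA_mul_self (k : ℕ) : sA k * sA k = 1 := Equiv.swap_mul_self _ _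

lemma sA_apply_cases (k m : ℕ) : sA k m = m ∨ (m = k ∧ sA k m = k+1) ∨ (m = k+1 ∧ sA k m = k) := by
  rcases eq_or_ne m k with rfl|h1
  · exact Or.inr (Or.inl ⟨rfl, sA_self _⟩)
  rcases eq_or_ne m (k+1) with rfl|h2
  · exact Or.inr (Or.inr ⟨rfl, sA_succ _⟩)
  · exact Or.inl (sA_other h1 h2)

/-! ### wordProdA lemmas -/

lemma wordProdA_nil : wordProdA [] = 1 := rfl
lemma wordProdA_cons (k : ℕ) (l : List ℕ) : wordProdA (k :: l) = sA k * wordProdA l := by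
  simp [wordProdA]
lemma wordProdA_append (l₁ l₂ : List ℕ) :
    wordProdA (l₁ ++ l₂) = wordProdA l₁ * wordProdA l₂ := by
  simp [wordProdA]

lemma wordProdA_reverse (l : List ℕ) : wordProdA l.reverse = (wordProdA l)⁻¹ := by
  induction l with
  | nil => simp [wordProdA]
  | cons k l ih =>
      rw [List.reverse_cons, wordProdA_append, wordProdA_cons, ih]
      simp [wordProdA, mul_inv_rev]
      rw [show (sA k)⁻¹ = sA k from by
        rw [eq_comm, eq_inv_iff_mul_eq_one, sA_mul_self]]

/-- a product of `sA` letters all ≥ some bound fixes small points -/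
lemma wordProdA_fix_lt {l : List ℕ} {m : ℕ} (h : ∀ i ∈ l, m < i) : wordProdA l m = m := by
  induction l with
  | nil => rfl
  | cons k l ih =>
      rw [wordProdA_cons]
      have := h k (by simp)
      simp only [Equiv.Perm.mul_apply]
      rw [ih (fun i hi => h i (by simp [hi])), sA_lt this]

lemma wordProdA_fix_gt {l : List ℕ} {m : ℕ} (h : ∀ i ∈ l, i + 1 < m) : wordProdA l m = m := by
  induction l with
  | nil => rfl
  | cons k l ih =>
      rw [wordProdA_cons]
      have := h k (by simp)
      simp only [Equiv.Perm.mul_apply]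
      rw [ih (fun i hi => h i (by simp [hi])), sA_gt this]

structure Fix01 (n : ℕ) (x : Equiv.Perm ℕ) : Prop where
  zero : x 0 = 0
  big : ∀ k, n < k → x k = k

lemma Fix01.one (n : ℕ) : Fix01 n 1 := ⟨rfl, fun _ _ => rfl⟩

lemma Fix01.mul {n : ℕ} {x y : Equiv.Perm ℕ} (hx : Fix01 n x) (hy : Fix01 n y) :
    Fix01 n (x * y) := by
  constructor
  · simp [Equiv.Perm.mul_apply, hy.zero, hx.zero]
  · intro k hk; simp [Equiv.Perm.mul_apply, hy.big k hk, hx.big k hk]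

lemma Fix01.inv {n : ℕ} {x : Equiv.Perm ℕ} (hx : Fix01 n x) : Fix01 n x⁻¹ := by
  constructor
  · exact (Equiv.Perm.inv_eq_iff_eq).2 hx.zero.symm
  · intro k hk; exact (Equiv.Perm.inv_eq_iff_eq).2 (hx.big k hk).symm

lemma Fix01.sA {n k : ℕ} (h1 : 1 ≤ k) (h2 : k < n) : Fix01 n (sA k) := by
  constructor
  · exact sA_lt (by omega)
  · intro m hm; exact sA_gt (by omega)

lemma Fix01.word {n : ℕ} {l : List ℕ} (h : ∀ i ∈ l, 1 ≤ i ∧ i < n) :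
    Fix01 n (wordProdA l) := by
  induction l with
  | nil => exact Fix01.one n
  | cons k l ih =>
      rw [wordProdA_cons]
      exact (Fix01.sA (h k (by simp)).1 (h k (by simp)).2).mul
        (ih (fun i hi => h i (by simp [hi])))

/-- Fix01 perms map [1,n] into [1,n] -/
lemma Fix01.mem_Icc {n : ℕ} {x : Equiv.Perm ℕ} (hx : Fix01 n x) {k : ℕ}
    (h1 : 1 ≤ k) (h2 : k ≤ n) : 1 ≤ x k ∧ x k ≤ n := by
  constructor
  · rcases Nat.eq_zero_or_pos (x k) with h|h
    · exfalso; have := hx.zero; have : x k = x 0 := by rw [h, this]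
      have := x.injective this; omega
    · exact h
  · by_contra h
    push_neg at h
    have := hx.big _ h
    have : x (x k) = x k := this
    have := x.injective this
    omega

/-! ### Inversion counting -/

def UF (n : ℕ) : Finset (ℕ × ℕ) := (Finset.Icc 1 n) ×ˢ (Finset.Icc 1 n)

def invF (n : ℕ) (x : Equiv.Perm ℕ) : Finset (ℕ × ℕ) :=
  (UF n).filter (fun q => q.1 < q.2 ∧ x q.2 < x q.1)

def badF (n : ℕ) (x y : Equiv.Perm ℕ) : Finset (ℕ × ℕ) :=
  (UF n).filter (fun q => q.1 < q.2 ∧ x q.2 < x q.1 ∧ y⁻¹ q.2 < y⁻¹ q.1)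

lemma mem_UF {n : ℕ} {q : ℕ × ℕ} : q ∈ UF n ↔ (1 ≤ q.1 ∧ q.1 ≤ n) ∧ (1 ≤ q.2 ∧ q.2 ≤ n) := by
  simp [UF, Finset.mem_Icc, and_assoc]

lemma mem_invF {n : ℕ} {x : Equiv.Perm ℕ} {q : ℕ × ℕ} :
    q ∈ invF n x ↔ ((1 ≤ q.1 ∧ q.1 ≤ n) ∧ (1 ≤ q.2 ∧ q.2 ≤ n)) ∧ q.1 < q.2 ∧ x q.2 < x q.1 := by
  simp [invF, Finset.mem_filter, mem_UF]

lemma mem_badF {n : ℕ} {x y : Equiv.Perm ℕ} {q : ℕ × ℕ} :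
    q ∈ badF n x y ↔ ((1 ≤ q.1 ∧ q.1 ≤ n) ∧ (1 ≤ q.2 ∧ q.2 ≤ n)) ∧
      q.1 < q.2 ∧ x q.2 < x q.1 ∧ y⁻¹ q.2 < y⁻¹ q.1 := by
  simp [badF, Finset.mem_filter, mem_UF]

/-- The key inequality: `inv(xy) + 2 bad(x,y) ≤ inv(x) + inv(y⁻¹)`. -/
lemma invF_mul_le (n : ℕ) (x y : Equiv.Perm ℕ) (hy : Fix01 n y) :
    (invF n (x * y)).card + 2 * (badF n x y).card
      ≤ (invF n x).card + (invF n y⁻¹).card := by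
  classical
  set T1 := (invF n x).filter (fun q => ¬ (y⁻¹ q.2 < y⁻¹ q.1)) with hT1
  set T2 := (invF n y⁻¹).filter (fun q => ¬ (x q.2 < x q.1)) with hT2
  have hsplit1 : T1.card + (badF n x y).card = (invF n x).card := by
    have h0 := Finset.card_filter_add_card_filter_not
      (s := invF n x) (p := fun q => ¬ (y⁻¹ q.2 < y⁻¹ q.1))
    have he : (invF n x).filter (fun a => ¬¬ (y⁻¹ a.2 < y⁻¹ a.1)) = badF n x y := by
      apply Finset.ext; intro q
      simp only [Finset.mem_filter, mem_invF, mem_badF]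
      tauto
    rw [he] at h0
    exact h0
  have hsplit2 : T2.card + (badF n x y).card = (invF n y⁻¹).card := by
    have h0 := Finset.card_filter_add_card_filter_not
      (s := invF n y⁻¹) (p := fun q => ¬ (x q.2 < x q.1))
    have he : (invF n y⁻¹).filter (fun a => ¬¬ (x a.2 < x a.1)) = badF n x y := by
      apply Finset.ext; intro q
      simp only [Finset.mem_filter, mem_invF, mem_badF, Equiv.Perm.inv_def, Equiv.symm_apply_apply]
      tauto
    rw [he] at h0
    exact h0
  have hmain : (invF n (x * y)).card ≤ T1.card + T2.card := by
    have hinj : (invF n (x * y)).card ≤ (T1 ∪ T2).card := by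
      apply Finset.card_le_card_of_injOn
        (fun q => if y q.1 < y q.2 then (y q.1, y q.2) else (y q.2, y q.1))
      · intro q hq
        rw [Finset.mem_coe, mem_invF] at hq; rw [Finset.mem_coe]
        obtain ⟨⟨⟨h11, h12⟩, h21, h22⟩, hlt, hinv⟩ := hq
        have hy1 := hy.mem_Icc h11 h12
        have hy2 := hy.mem_Icc h21 h22
        simp only [Equiv.Perm.mul_apply] at hinv
        by_cases hc : y q.1 < y q.2
        · simp only [hc, if_pos]
          apply Finset.mem_union_left
          rw [hT1, Finset.mem_filter, mem_invF]
          dsimp only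
          refine ⟨⟨⟨hy1, hy2⟩, hc, hinv⟩, ?_⟩
          simp only [Equiv.Perm.inv_def, Equiv.symm_apply_apply]
          omega
        · simp only [hc, if_neg, not_false_iff]
          apply Finset.mem_union_right
          rw [hT2, Finset.mem_filter, mem_invF]
          dsimp only
          have hne : y q.1 ≠ y q.2 := fun h => by
            have := y.injective h; omega
          refine ⟨⟨⟨hy2, hy1⟩, by omega, ?_⟩, by omega⟩
          simp only [Equiv.Perm.inv_def, Equiv.symm_apply_apply]
          omega
      · intro a ha b hb hab
        rw [Finset.mem_coe, mem_invF] at ha hb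
        have hea : y a.1 = y b.1 ∨ y a.1 = y b.2 := by
          by_cases h1 : y a.1 < y a.2 <;> by_cases h2 : y b.1 < y b.2 <;>
            simp only [h1, h2, if_pos, if_neg, not_false_iff, Prod.mk.injEq] at hab <;>
            tauto
        have heb : y a.2 = y b.1 ∨ y a.2 = y b.2 := by
          by_cases h1 : y a.1 < y a.2 <;> by_cases h2 : y b.1 < y b.2 <;>
            simp only [h1, h2, if_pos, if_neg, not_false_iff, Prod.mk.injEq] at hab <;>
            tauto
        have e1 : a.1 = b.1 ∨ a.1 = b.2 := by
          rcases hea with h|h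
          · exact Or.inl (y.injective h)
          · exact Or.inr (y.injective h)
        have e2 : a.2 = b.1 ∨ a.2 = b.2 := by
          rcases heb with h|h
          · exact Or.inl (y.injective h)
          · exact Or.inr (y.injective h)
        have : a.1 = b.1 ∧ a.2 = b.2 := by omega
        exact Prod.ext this.1 this.2
    calc (invF n (x * y)).card ≤ (T1 ∪ T2).card := hinj
      _ ≤ T1.card + T2.card := Finset.card_union_le _ _
  omega

lemma sA_inv (k : ℕ) : (sA k)⁻¹ = sA k := Equiv.swap_inv _ _

lemma invF_sA_subset (n k : ℕ) : invF n (sA k) ⊆ {(k, k+1)} := by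
  intro q hq
  rw [mem_invF] at hq
  obtain ⟨⟨⟨h11, h12⟩, h21, h22⟩, hlt, hinv⟩ := hq
  rcases sA_apply_cases k q.1 with e1|⟨e1,e1'⟩|⟨e1,e1'⟩ <;>
    rcases sA_apply_cases k q.2 with e2|⟨e2,e2'⟩|⟨e2,e2'⟩ <;>
      rw [Finset.mem_singleton, Prod.ext_iff] <;> omega

lemma invF_sA_card_le (n k : ℕ) : (invF n (sA k)).card ≤ 1 := by
  calc (invF n (sA k)).card ≤ ({(k, k+1)} : Finset (ℕ × ℕ)).card :=
        Finset.card_le_card (invF_sA_subset n k)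
    _ = 1 := Finset.card_singleton _

/-- any product of valid letters has at most word-length many inversions -/
lemma invF_word_le (n : ℕ) (l : List ℕ) (h : ∀ i ∈ l, 1 ≤ i ∧ i < n) :
    (invF n (wordProdA l)).card ≤ l.length := by
  induction l using List.reverseRecOn with
  | nil =>
      simp only [List.length_nil, Nat.le_zero, Finset.card_eq_zero]
      apply Finset.eq_empty_of_forall_notMem
      intro q hq
      rw [mem_invF] at hq
      simp only [wordProdA_nil, Equiv.Perm.one_apply] at hq
      omega
  | append_singleton l k ih =>
      rw [wordProdA_append]
      have hk := h k (by simp)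
      have hl : ∀ i ∈ l, 1 ≤ i ∧ i < n := fun i hi => h i (by simp [hi])
      have := invF_mul_le n (wordProdA l) (wordProdA [k])
        (Fix01.word (by intro i hi; simp at hi; subst hi; exact hk))
      have h1 : wordProdA [k] = sA k := by simp [wordProdA]
      rw [h1, sA_inv] at this
      rw [h1]
      have := invF_sA_card_le n k
      have := ih hl
      simp only [List.length_append, List.length_singleton]
      omega

/-- adjacent increasing implies monotone on an interval -/
lemma mono_adj {f : ℕ → ℕ} {lo hi : ℕ} (h : ∀ k, lo ≤ k → k + 1 ≤ hi → f k < f (k+1)) :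
    ∀ p q, lo ≤ p → p < q → q ≤ hi → f p < f q := by
  intro p q hp hpq hq
  obtain ⟨m, rfl⟩ : ∃ m, q = p + 1 + m := ⟨q - p - 1, by omega⟩
  clear hpq
  induction m with
  | zero => exact h p hp (by omega)
  | succ m ih =>
      calc f p < f (p + 1 + m) := ih (by omega)
        _ < f (p + 1 + m + 1) := h _ (by omega) (by omega)
      
/-- no inversions ⇒ identity -/
lemma eq_one_of_invF_empty {n : ℕ} {x : Equiv.Perm ℕ} (hx : Fix01 n x)
    (h : (invF n x).card = 0) : x = 1 := by
  rw [Finset.card_eq_zero] at h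
  have hmono : ∀ p q, 1 ≤ p → p < q → q ≤ n → x p < x q := by
    intro p q hp hpq hq
    have hne : x p ≠ x q := fun he => by have := x.injective he; omega
    rcases lt_or_gt_of_ne hne with h'|h'
    · exact h'
    · exfalso
      have : (p, q) ∈ invF n x := by
        rw [mem_invF]; exact ⟨⟨⟨hp, by omega⟩, by omega, hq⟩, hpq, h'⟩
      rw [h] at this; exact absurd this (Finset.notMem_empty _)
  have hge : ∀ k, 1 ≤ k → k ≤ n → k ≤ x k := by
    intro k
    induction k with
    | zero => omega
    | succ m ih =>
        intro _ hm
        rcases Nat.eq_zero_or_pos m with rfl|hm'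
        · have := (hx.mem_Icc (k := 0 + 1) (by omega) hm).1
          omega
        · have h1 := ih (by omega) (by omega)
          have h2 := hmono m (m+1) (by omega) (by omega) hm
          omega
  have hle : ∀ j k, 1 ≤ k → k + j = n → x k ≤ k := by
    intro j
    induction j with
    | zero => intro k hk hkn; have := (hx.mem_Icc hk (by omega)).2; omega
    | succ m ih =>
        intro k hk hkn
        have h1 := ih (k+1) (by omega) (by omega)
        have h2 := hmono k (k+1) hk (by omega) (by omega)
        omega
  apply Equiv.ext
  intro k
  rcases Nat.eq_zero_or_pos k with rfl|hk
  · exact hx.zero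
  rcases le_or_gt k n with hkn|hkn
  · have := hge k hk hkn
    have := hle (n - k) k hk (by omega)
    simp only [Equiv.Perm.one_apply]; omega
  · exact hx.big k hkn

/-- bubble sort: every Fix01 permutation has a word of length at most its inversion count -/
lemma exists_word_of_Fix01 {n : ℕ} : ∀ m (x : Equiv.Perm ℕ), Fix01 n x → (invF n x).card ≤ m →
    ∃ l : List ℕ, (∀ i ∈ l, 1 ≤ i ∧ i < n) ∧ wordProdA l = x ∧ l.length ≤ (invF n x).card := by
  intro m
  induction m with
  | zero =>
      intro x hx hm
      refine ⟨[], by simp, ?_, by simp⟩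
      rw [wordProdA_nil, eq_comm]
      exact eq_one_of_invF_empty hx (by omega)
  | succ m ih =>
      intro x hx hm
      by_cases h0 : (invF n x).card = 0
      · refine ⟨[], by simp, ?_, by simp⟩
        rw [wordProdA_nil, eq_comm]
        exact eq_one_of_invF_empty hx h0
      -- there is an adjacent descent
      have hdesc : ∃ k, 1 ≤ k ∧ k + 1 ≤ n ∧ x (k+1) < x k := by
        by_contra hc
        push_neg at hc
        apply h0
        rw [Finset.card_eq_zero]
        apply Finset.eq_empty_of_forall_notMem
        intro q hq
        rw [mem_invF] at hq
        obtain ⟨⟨⟨h11, h12⟩, h21, h22⟩, hlt, hinv⟩ := hq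
        have : ∀ k, 1 ≤ k → k + 1 ≤ n → x k < x (k+1) := by
          intro k h1 h2
          have := hc k h1 h2
          have hne : x k ≠ x (k+1) := fun he => by have := x.injective he; omega
          omega
        have := mono_adj (lo := 1) (hi := n) this q.1 q.2 h11 hlt h22
        omega
      obtain ⟨k, hk1, hk2, hkd⟩ := hdesc
      set x' := x * sA k with hx'
      have hxx : x = x' * sA k := by
        rw [hx', mul_assoc, sA_mul_self, mul_one]
      have hfix' : Fix01 n x' := hx.mul (Fix01.sA hk1 (by omega))
      -- (k, k+1) is a bad pair for (x, sA k)
      have hbadmem : (k, k+1) ∈ badF n x (sA k) := by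
        rw [mem_badF]
        refine ⟨⟨⟨hk1, by omega⟩, by omega, hk2⟩, by omega, ?_, ?_⟩
        · exact hkd
        · dsimp only
          rw [sA_inv, sA_self, sA_succ]
          omega
      have hineq := invF_mul_le n x (sA k) (Fix01.sA hk1 (by omega))
      rw [← hx', sA_inv] at hineq
      have hsA := invF_sA_card_le n k
      have hbad1 : 1 ≤ (badF n x (sA k)).card := Finset.card_pos.2 ⟨_, hbadmem⟩
      have hlt' : (invF n x').card < (invF n x).card := by omega
      obtain ⟨l, hl1, hl2, hl3⟩ := ih x' hfix' (by omega)
      refine ⟨l ++ [k], ?_, ?_, ?_⟩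
      · intro i hi
        simp only [List.mem_append, List.mem_singleton] at hi
        rcases hi with hi|rfl
        · exact hl1 i hi
        · exact ⟨hk1, by omega⟩
      · have h1 : wordProdA [k] = sA k := by simp [wordProdA]
        rw [wordProdA_append, hl2, h1, hxx]
      · simp only [List.length_append, List.length_singleton]
        omega

/-! ### lenA lemmas -/

lemma lenA_le_word (n : ℕ) (l : List ℕ) (h : ∀ i ∈ l, 1 ≤ i ∧ i < n) :
    lenA n (wordProdA l) ≤ l.length :=
  Nat.sInf_le ⟨l, rfl, h, rfl⟩

lemma lenA_le_invF {n : ℕ} {x : Equiv.Perm ℕ} (hx : Fix01 n x) :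
    lenA n x ≤ (invF n x).card := by
  obtain ⟨l, hl1, hl2, hl3⟩ := exists_word_of_Fix01 (invF n x).card x hx le_rfl
  calc lenA n x = lenA n (wordProdA l) := by rw [hl2]
    _ ≤ l.length := lenA_le_word n l hl1
    _ ≤ _ := hl3

lemma invF_le_lenA {n : ℕ} {x : Equiv.Perm ℕ}
    (hne : ∃ l : List ℕ, (∀ i ∈ l, 1 ≤ i ∧ i < n) ∧ wordProdA l = x) :
    (invF n x).card ≤ lenA n x := by
  obtain ⟨l0, hl0, hl0'⟩ := hne
  have hnonempty : {k | ∃ l : List ℕ, l.length = k ∧ (∀ i ∈ l, 1 ≤ i ∧ i < n) ∧ wordProdA l = x}.Nonempty :=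
    ⟨l0.length, l0, rfl, hl0, hl0'⟩
  obtain ⟨l, hlen, hval, hprod⟩ := Nat.sInf_mem hnonempty
  have h2 : (invF n (wordProdA l)).card ≤ l.length := invF_word_le n l hval
  rw [hprod] at h2
  have h3 : lenA n x = l.length := hlen.symm
  omega

/-! ### Structure of rowBoxesA / subPermA -/

def rowBlockA (l : ℕ → ℕ) (i0 : ℕ) : List (ℕ × ℕ) :=
  ((List.range (l (i0 + 1))).reverse).map fun j0 => (i0 + 1, j0 + 1)

lemma rowBoxesA_eq (d : ℕ) (l : ℕ → ℕ) :
    rowBoxesA d l = ((List.range d).reverse).flatMap (rowBlockA l) := rfl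

lemma mem_rowBlockA {l : ℕ → ℕ} {i0 : ℕ} {p : ℕ × ℕ} :
    p ∈ rowBlockA l i0 ↔ p.1 = i0 + 1 ∧ 1 ≤ p.2 ∧ p.2 ≤ l (i0 + 1) := by
  simp only [rowBlockA, List.mem_map, List.mem_reverse, List.mem_range]
  constructor
  · rintro ⟨j0, hj0, rfl⟩; exact ⟨rfl, by omega, by omega⟩
  · rintro ⟨h1, h2, h3⟩
    exact ⟨p.2 - 1, by omega, by rw [← h1]; ext <;> simp <;> omega⟩

lemma mem_rowBoxesA {d : ℕ} {l : ℕ → ℕ} {p : ℕ × ℕ} :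
    p ∈ rowBoxesA d l ↔ 1 ≤ p.1 ∧ p.1 ≤ d ∧ 1 ≤ p.2 ∧ p.2 ≤ l p.1 := by
  rw [rowBoxesA_eq, List.mem_flatMap]
  constructor
  · rintro ⟨i0, hi0, hp⟩
    rw [mem_rowBlockA] at hp
    simp only [List.mem_reverse, List.mem_range] at hi0
    refine ⟨by omega, by omega, hp.2.1, by rw [hp.1]; exact hp.2.2⟩
  · rintro ⟨h1, h2, h3, h4⟩
    refine ⟨p.1 - 1, by simp only [List.mem_reverse, List.mem_range]; omega, ?_⟩
    rw [mem_rowBlockA]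
    have : p.1 - 1 + 1 = p.1 := by omega
    rw [this]
    exact ⟨rfl, h3, h4⟩

lemma nodup_rowBlockA (l : ℕ → ℕ) (i0 : ℕ) : (rowBlockA l i0).Nodup := by
  apply List.Nodup.map
  · intro a b hab
    simpa using congrArg Prod.snd hab
  · exact List.nodup_reverse.2 (List.nodup_range)

lemma nodup_rowBoxesA (d : ℕ) (l : ℕ → ℕ) : (rowBoxesA d l).Nodup := by
  rw [rowBoxesA_eq, List.nodup_flatMap]
  constructor
  · intro i0 _; exact nodup_rowBlockA l i0
  · apply List.Pairwise.imp ?_ (List.nodup_reverse.2 (List.nodup_range))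
    intro a b hab
    intro p hpa hpb
    rw [mem_rowBlockA] at hpa hpb
    exact hab (by omega)

def boxListA (d : ℕ) (l : ℕ → ℕ) (C : Finset (ℕ × ℕ)) : List (ℕ × ℕ) :=
  (rowBoxesA d l).filter fun p => decide (p ∈ C)

lemma subPermA_eq_word (d : ℕ) (l : ℕ → ℕ) (C : Finset (ℕ × ℕ)) :
    subPermA d l C = wordProdA ((boxListA d l C).map (fun p => d - p.1 + p.2)) := by
  rw [subPermA, wordProdA, List.map_map, boxListA]
  rfl

lemma mem_boxListA {d : ℕ} {l : ℕ → ℕ} {C : Finset (ℕ × ℕ)} {p : ℕ × ℕ} :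
    p ∈ boxListA d l C ↔ p ∈ rowBoxesA d l ∧ p ∈ C := by
  simp [boxListA, List.mem_filter]

lemma boxListA_length {d : ℕ} {l : ℕ → ℕ} {C : Finset (ℕ × ℕ)}
    (hC : ∀ p ∈ C, p ∈ rowBoxesA d l) : (boxListA d l C).length = C.card := by
  have hnd : (boxListA d l C).Nodup := (nodup_rowBoxesA d l).filter _
  have : (boxListA d l C).toFinset = C := by
    apply Finset.ext
    intro p
    rw [List.mem_toFinset, mem_boxListA]
    exact ⟨fun h => h.2, fun h => ⟨hC p h, h⟩⟩
  conv_rhs => rw [← this]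
  rw [List.toFinset_card_of_nodup hnd]

/-- letters of the row `r` of `C`, in decreasing order -/
def rowLettersA (d : ℕ) (μ : ℕ → ℕ) (C : Finset (ℕ × ℕ)) (r : ℕ) : List ℕ :=
  (((List.range (μ r)).reverse).filter (fun j0 => decide ((r, j0 + 1) ∈ C))).map
    (fun j0 => d - r + (j0 + 1))

lemma mem_rowLettersA {d : ℕ} {μ : ℕ → ℕ} {C : Finset (ℕ × ℕ)} {r x : ℕ} :
    x ∈ rowLettersA d μ C r ↔ ∃ j, 1 ≤ j ∧ j ≤ μ r ∧ (r, j) ∈ C ∧ x = d - r + j := by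
  simp only [rowLettersA, List.mem_map, List.mem_filter, List.mem_reverse, List.mem_range,
    decide_eq_true_eq]
  constructor
  · rintro ⟨j0, ⟨hj0, hj0'⟩, rfl⟩
    exact ⟨j0 + 1, by omega, by omega, hj0', rfl⟩
  · rintro ⟨j, h1, h2, h3, rfl⟩
    have hj : j - 1 + 1 = j := by omega
    refine ⟨j - 1, ⟨by omega, ?_⟩, ?_⟩
    · rw [hj]; exact h3
    · rw [hj]

lemma rowLettersA_sorted (d : ℕ) (μ : ℕ → ℕ) (C : Finset (ℕ × ℕ)) (r : ℕ) (hrd : r ≤ d) :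
    (rowLettersA d μ C r).Pairwise (fun a b => b < a) := by
  apply List.Pairwise.map
  case H =>
    exact fun a b (h : b < a) => by omega
  apply List.Pairwise.filter
  have : (List.range (μ r)).reverse.Pairwise (fun a b => b < a) := by
    rw [List.pairwise_reverse]
    exact List.pairwise_lt_range
  exact this

/-- dropping empty top blocks: if all boxes of `C` lie in rows ≤ s, the filtered list only
sees the blocks of rows ≤ s -/
lemma boxListA_drop {d : ℕ} {μ : ℕ → ℕ} {C : Finset (ℕ × ℕ)} {s : ℕ} (hs : s ≤ d)
    (hC : ∀ p ∈ C, p.1 ≤ s) :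
    boxListA d μ C = ((List.range s).reverse.flatMap (rowBlockA μ)).filter
      (fun p => decide (p ∈ C)) := by
  rw [boxListA, rowBoxesA_eq]
  have : d = s + (d - s) := by omega
  rw [this, List.range_add, List.reverse_append, List.flatMap_append, List.filter_append]
  have hnil : (((List.map (fun x => s + x) (List.range (d - s))).reverse.flatMap
      (rowBlockA μ)).filter (fun p => decide (p ∈ C))) = [] := by
    rw [List.filter_eq_nil_iff]
    intro p hp
    rw [List.mem_flatMap] at hp
    obtain ⟨i0, hi0, hp⟩ := hp
    simp only [List.mem_reverse, List.mem_map, List.mem_range] at hi0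
    obtain ⟨t, _, rfl⟩ := hi0
    rw [mem_rowBlockA] at hp
    simp only [decide_eq_true_eq]
    intro hpc
    have := hC p hpc
    omega
  rw [hnil, List.nil_append]

/-- peeling the bottom row -/
lemma boxListA_split {d : ℕ} {μ : ℕ → ℕ} {C : Finset (ℕ × ℕ)} {r : ℕ} (hr : 1 ≤ r)
    (hrd : r ≤ d) (hC : ∀ p ∈ C, p.1 ≤ r) :
    boxListA d μ C = ((rowBlockA μ (r-1)).filter (fun p => decide (p ∈ C)))
      ++ boxListA d μ (C.filter (fun p => p.1 < r)) := by
  rw [boxListA_drop hrd hC]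
  have h1 : r = (r - 1) + 1 := by omega
  rw [h1, List.range_succ, List.reverse_append, List.reverse_singleton, List.singleton_append,
    List.flatMap_cons, List.filter_append]
  congr 1
  rw [boxListA_drop (s := r - 1) (by omega) (by intro p hp; rw [Finset.mem_filter] at hp; omega)]
  apply List.filter_congr
  intro p hp
  rw [List.mem_flatMap] at hp
  obtain ⟨i0, hi0, hp⟩ := hp
  simp only [List.mem_reverse, List.mem_range] at hi0
  rw [mem_rowBlockA] at hp
  simp only [decide_eq_true_eq, Finset.mem_filter]
  rw [decide_eq_decide]
  have : p.1 < r - 1 + 1 := by omega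
  exact ⟨fun h => ⟨h, this⟩, fun h => h.1⟩

/-- the mapped letters of the bottom-row part agree with `rowLettersA` -/
lemma rowBlock_letters {d : ℕ} {μ : ℕ → ℕ} {C : Finset (ℕ × ℕ)} {r : ℕ} (hr : 1 ≤ r) :
    ((rowBlockA μ (r-1)).filter (fun p => decide (p ∈ C))).map (fun p => d - p.1 + p.2)
      = rowLettersA d μ C r := by
  have h1 : r - 1 + 1 = r := by omega
  rw [rowBlockA, rowLettersA, h1, List.filter_map, List.map_map]
  rfl

lemma subPermA_split {d : ℕ} {μ : ℕ → ℕ} {C : Finset (ℕ × ℕ)} {r : ℕ} (hr : 1 ≤ r)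
    (hrd : r ≤ d) (hC : ∀ p ∈ C, p.1 ≤ r) :
    subPermA d μ C = wordProdA (rowLettersA d μ C r)
      * subPermA d μ (C.filter (fun p => p.1 < r)) := by
  rw [subPermA_eq_word, boxListA_split hr hrd hC, List.map_append, wordProdA_append,
    rowBlock_letters hr, ← subPermA_eq_word]


/-! ### products over strictly descending letter lists -/

lemma desc_prod_succ {L : List ℕ} (hL : L.Pairwise (fun a b => b < a)) {A : ℕ} (hA : A ∈ L) :
    wordProdA L (A + 1) = A := by
  induction L with
  | nil => simp at hA
  | cons k L' ih =>
      rw [wordProdA_cons]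
      have hk : ∀ x ∈ L', x < k := fun x hx => (List.pairwise_cons.1 hL).1 x hx
      rcases List.mem_cons.1 hA with rfl|hA'
      · have hfix : wordProdA L' (A + 1) = A + 1 :=
          wordProdA_fix_gt (fun i hi => by have := hk i hi; omega)
        simp only [Equiv.Perm.mul_apply, hfix, sA_succ]
      · have := ih (List.pairwise_cons.1 hL).2 hA'
        simp only [Equiv.Perm.mul_apply, this]
        exact sA_lt (hk A hA')

lemma desc_prod_climb {L : List ℕ} (hL : L.Pairwise (fun a b => b < a)) {A : ℕ}
    (hA : A ∈ L) (hA' : ∀ x ∈ L, x ≠ A - 1) (hA1 : 1 ≤ A) :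
    A + 1 ≤ wordProdA L A := by
  induction L with
  | nil => simp at hA
  | cons k L' ih
  =>
      rw [wordProdA_cons]
      have hk : ∀ x ∈ L', x < k := fun x hx => (List.pairwise_cons.1 hL).1 x hx
      rcases List.mem_cons.1 hA with rfl|hA2
      · have hfix : wordProdA L' A = A := by
          apply wordProdA_fix_gt
          intro i hi
          have h1 := hk i hi
          have h2 := hA' i (by simp [hi])
          omega
        simp only [Equiv.Perm.mul_apply, hfix, sA_self]
        omega
      · have hIH := ih (List.pairwise_cons.1 hL).2 hA2 (fun x hx => hA' x (by simp [hx]))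
        have hAk : A < k := hk A hA2
        simp only [Equiv.Perm.mul_apply]
        set y := wordProdA L' A with hy
        rcases sA_apply_cases k y with h|⟨rfl,h⟩|⟨h1,h⟩ <;> omega

/-- the cycle `(m+c+1, m+c, ..., m+1)` as a product -/
def cycA (m c : ℕ) : Equiv.Perm ℕ := wordProdA ((List.range' (m+1) c).reverse)

lemma cycA_zero (m : ℕ) : cycA m 0 = 1 := rfl

lemma cycA_succ (m c : ℕ) : cycA m (c + 1) = sA (m + 1 + c) * cycA m c := by
  rw [cycA, cycA, List.range'_concat, List.reverse_append, List.reverse_singleton,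
    List.singleton_append, wordProdA_cons]
  norm_num

lemma cycA_low {m c x : ℕ} (h : x ≤ m) : cycA m c x = x := by
  apply wordProdA_fix_lt
  intro i hi
  rw [List.mem_reverse, List.mem_range'_1] at hi
  omega

lemma cycA_high {m c x : ℕ} (h : m + c + 2 ≤ x) : cycA m c x = x := by
  apply wordProdA_fix_gt
  intro i hi
  rw [List.mem_reverse, List.mem_range'_1] at hi
  omega

lemma cycA_top (m c : ℕ) : cycA m c (m + 1) = m + c + 1 := by
  induction c with
  | zero => rw [cycA_zero]; rfl
  | succ c ih =>
      rw [cycA_succ]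
      simp only [Equiv.Perm.mul_apply, ih]
      have : m + c + 1 = m + 1 + c := by omega
      rw [this, sA_self]
      omega

lemma cycA_mid {m c x : ℕ} (h1 : m + 2 ≤ x) (h2 : x ≤ m + c + 1) : cycA m c x = x - 1 := by
  induction c with
  | zero => omega
  | succ c ih =>
      rw [cycA_succ]
      simp only [Equiv.Perm.mul_apply]
      rcases le_or_gt x (m + c + 1) with h|h
      · rw [ih h]
        exact sA_lt (by omega)
      · have hx : x = m + c + 2 := by omega
        have : cycA m c x = x := cycA_high (by omega)
        rw [this, hx]
        have h1 : m + c + 2 = (m + 1 + c) + 1 := by omega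
        rw [h1, sA_succ]
        omega

/-- a strictly descending list with interval membership is the (reversed) interval -/
lemma desc_interval_eq {L : List ℕ} (hL : L.Pairwise (fun a b => b < a)) {m c : ℕ}
    (hmem : ∀ x, x ∈ L ↔ m + 1 ≤ x ∧ x ≤ m + c) :
    L = (List.range' (m+1) c).reverse := by
  haveI : IsAntisymm ℕ (fun a b => b < a) := ⟨fun a b h1 h2 => by omega⟩
  refine List.Perm.eq_of_pairwise (le := fun a b => b < a) (fun a b _ _ h1 h2 => by omega) ?_ ?_ ?_
  rotate_right
  · apply List.perm_of_nodup_nodup_toFinset_eq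
    · exact List.Pairwise.imp (fun h => by omega) hL
    · exact List.nodup_reverse.2 ((List.pairwise_lt_range').imp (fun h => by omega))
    · apply Finset.ext
      intro x
      rw [List.mem_toFinset, List.mem_toFinset, List.mem_reverse, List.mem_range'_1, hmem]
      omega
  · exact hL
  · rw [List.pairwise_reverse]
    exact List.pairwise_lt_range'

/-! ### The rigidity lemma -/

lemma rigidity (n d : ℕ) (μ : ℕ → ℕ) (hdn : d ≤ n)
    (hμ : ∀ i j, 1 ≤ i → i ≤ d → 1 ≤ j → j ≤ μ i → d - i + j < n) :
    ∀ r, r ≤ d → ∀ C : Finset (ℕ × ℕ),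
    (∀ p ∈ C, 1 ≤ p.1 ∧ p.1 ≤ r ∧ 1 ≤ p.2 ∧ p.2 ≤ μ p.1) →
    (∀ a b, (a, b) ∈ C → 2 ≤ a → 2 ≤ b →
        ((a-1, b-1) ∈ C ∨ (a-1, b) ∈ C ∨ (a, b-1) ∈ C)) →
    C.card = lenA n (subPermA d μ C) →
    (∀ k, d ≤ k + r → k + 1 ≤ d → subPermA d μ C k < subPermA d μ C (k+1)) →
    (∀ k, d + 1 ≤ k → k + 1 ≤ n → subPermA d μ C k < subPermA d μ C (k+1)) →
    ∀ a b, ((a, b) ∈ C ↔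
      1 ≤ a ∧ a ≤ r ∧ 1 ≤ b ∧ (d - a + 1) + b ≤ subPermA d μ C (d - a + 1)) := by
  intro r
  induction r with
  | zero =>
      intro _ C hrow _ _ _ _ a b
      constructor
      · intro h; have := hrow (a, b) h; omega
      · intro h; omega
  | succ r' ih =>
      intro hrd C hrow hnde hred hinc1 hinc2
      set r := r' + 1 with hr
      set D0 := d - r with hD0
      have hD0' : D0 + r = d := by omega
      set w := subPermA d μ C with hw
      set Clow := C.filter (fun p => p.1 < r) with hClow
      set u := subPermA d μ Clow with hu
      set P := wordProdA (rowLettersA d μ C r) with hP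
      have hrowle : ∀ p ∈ C, p.1 ≤ r := fun p hp => (hrow p hp).2.1
      have hsplit : w = P * u := subPermA_split (by omega) hrd hrowle
      -- basic facts about the words
      have hrow_low : ∀ p ∈ Clow, 1 ≤ p.1 ∧ p.1 ≤ r' ∧ 1 ≤ p.2 ∧ p.2 ≤ μ p.1 := by
        intro p hp
        rw [hClow, Finset.mem_filter] at hp
        have := hrow p hp.1
        omega
      have hPletters : ∀ x ∈ rowLettersA d μ C r, 1 ≤ x ∧ x < n := by
        intro x hx
        rw [mem_rowLettersA] at hx
        obtain ⟨j, h1, h2, h3, rfl⟩ := hx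
        have := hμ r j (by omega) hrd h1 h2
        omega
      have hPletters2 : ∀ x ∈ rowLettersA d μ C r, D0 + 1 ≤ x := by
        intro x hx
        rw [mem_rowLettersA] at hx
        obtain ⟨j, h1, h2, h3, rfl⟩ := hx
        omega
      have hlowletters : ∀ x ∈ (boxListA d μ Clow).map (fun p => d - p.1 + p.2),
          D0 + 2 ≤ x ∧ x < n := by
        intro x hx
        rw [List.mem_map] at hx
        obtain ⟨p, hp, rfl⟩ := hx
        rw [mem_boxListA] at hp
        have h1 := hrow_low p hp.2
        have h2 := hμ p.1 p.2 h1.1 (by omega) h1.2.2.1 h1.2.2.2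
        omega
      have hCletters : ∀ x ∈ (boxListA d μ C).map (fun p => d - p.1 + p.2),
          1 ≤ x ∧ x < n := by
        intro x hx
        rw [List.mem_map] at hx
        obtain ⟨p, hp, rfl⟩ := hx
        rw [mem_boxListA] at hp
        have h1 := hrow p hp.2
        have h2 := hμ p.1 p.2 h1.1 (by omega) h1.2.2.1 h1.2.2.2
        omega
      have hlowletters' : ∀ x ∈ (boxListA d μ Clow).map (fun p => d - p.1 + p.2),
          1 ≤ x ∧ x < n := fun x hx => by have := hlowletters x hx; omega
      have huword : u = wordProdA ((boxListA d μ Clow).map (fun p => d - p.1 + p.2)) :=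
        subPermA_eq_word d μ Clow
      have hwword : w = wordProdA ((boxListA d μ C).map (fun p => d - p.1 + p.2)) :=
        subPermA_eq_word d μ C
      have hufix : Fix01 n u := by rw [huword]; exact Fix01.word hlowletters'
      have hwfix : Fix01 n w := by rw [hwword]; exact Fix01.word hCletters
      have hPfix : Fix01 n P := by rw [hP]; exact Fix01.word hPletters
      -- u fixes [0, D0+1]
      have hufixlow : ∀ x, x ≤ D0 + 1 → u x = x := by
        intro x hx
        rw [huword]
        apply wordProdA_fix_lt
        intro i hi
        have := hlowletters i hi
        omega
      -- cardinalities
      have hClow_sub : ∀ p ∈ Clow, p ∈ rowBoxesA d μ := by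
        intro p hp
        have := hrow_low p hp
        rw [mem_rowBoxesA]
        omega
      have hC_sub : ∀ p ∈ C, p ∈ rowBoxesA d μ := by
        intro p hp
        have := hrow p hp
        rw [mem_rowBoxesA]
        omega
      have hlen_low : ((boxListA d μ Clow).map (fun p => d - p.1 + p.2)).length = Clow.card := by
        rw [List.length_map]; exact boxListA_length hClow_sub
      have hlen_C : ((boxListA d μ C).map (fun p => d - p.1 + p.2)).length = C.card := by
        rw [List.length_map]; exact boxListA_length hC_sub
      set s := (rowLettersA d μ C r).length with hs
      have hcardsplit : C.card = s + Clow.card := by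
        have h1 := boxListA_split (μ := μ) (C := C) (r := r) (by omega) hrd hrowle
        have h2 := congrArg List.length h1
        rw [List.length_append] at h2
        have h3 : ((rowBlockA μ (r-1)).filter (fun p => decide (p ∈ C))).length = s := by
          rw [hs, ← rowBlock_letters (C := C) (d := d) (by omega), List.length_map]
        rw [boxListA_length hC_sub, ← hClow] at h2
        rw [boxListA_length hClow_sub] at h2
        omega
      -- inversion bookkeeping
      have hbadzero : (badF n P u).card = 0 ∧ Clow.card = lenA n u := by
        have hkey := invF_mul_le n P u hufix
        rw [← hsplit] at hkey
        have hinvP : (invF n P).card ≤ s := by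
          rw [hP]; exact invF_word_le n _ hPletters
        have hinvuinv : (invF n u⁻¹).card ≤ Clow.card := by
          have h1 : (invF n (wordProdA (((boxListA d μ Clow).map
              (fun p => d - p.1 + p.2)).reverse))).card
              ≤ (((boxListA d μ Clow).map (fun p => d - p.1 + p.2)).reverse).length := by
            apply invF_word_le
            intro i hi
            rw [List.mem_reverse] at hi
            exact hlowletters' i hi
          rw [wordProdA_reverse, List.length_reverse] at h1
          rw [huword]
          omega
        have hinvw : C.card ≤ (invF n w).card := by
          rw [hred]; exact lenA_le_invF hwfix
        have hlenu_le : lenA n u ≤ Clow.card := by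
          rw [huword, ← hlen_low]
          exact lenA_le_word n _ hlowletters'
        -- lenA n u ≥ (invF n u⁻¹).card
        have hlenu_ge : (invF n u⁻¹).card ≤ lenA n u := by
          have hne : {k | ∃ l : List ℕ, l.length = k ∧ (∀ i ∈ l, 1 ≤ i ∧ i < n) ∧
              wordProdA l = u}.Nonempty := by
            refine ⟨_, _, rfl, hlowletters', huword.symm⟩
          obtain ⟨l, hlen, hval, hprod⟩ := Nat.sInf_mem hne
          have h1 : (invF n (wordProdA l.reverse)).card ≤ l.reverse.length := by
            apply invF_word_le
            intro i hi
            rw [List.mem_reverse] at hi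
            exact hval i hi
          rw [wordProdA_reverse, hprod, List.length_reverse] at h1
          have h3 : lenA n u = l.length := hlen.symm
          omega
        -- chain
        have hfinal : (invF n u⁻¹).card = Clow.card ∧ (badF n P u).card = 0 := by
          constructor <;> omega
        exact ⟨hfinal.2, by omega⟩
      obtain ⟨hbad0, hredu⟩ := hbadzero
      have hNB : ∀ v1 v2, 1 ≤ v1 → v1 < v2 → v2 ≤ n → P v2 < P v1 →
          u⁻¹ v2 < u⁻¹ v1 → False := by
        intro v1 v2 h1 h2 h3 h4 h5
        have hmem : (v1, v2) ∈ badF n P u := by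
          rw [mem_badF]
          exact ⟨⟨⟨h1, by omega⟩, by omega, h3⟩, h2, h4, h5⟩
        have := Finset.card_pos.2 ⟨_, hmem⟩
        omega
      -- u is monotone where w is
      have humono1 : ∀ k, d ≤ k + r' → k + 1 ≤ d → u k < u (k+1) := by
        intro k h1 h2
        have hk1 : 1 ≤ k := by omega
        have hwinc := hinc1 k (by omega) h2
        by_contra hcon
        push_neg at hcon
        have hne : u k ≠ u (k+1) := fun he => by have := u.injective he; omega
        have hlt : u (k+1) < u k := by omega
        have hb1 := hufix.mem_Icc hk1 (by omega)
        have hb2 := hufix.mem_Icc (k := k + 1) (by omega) (by omega)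
        apply hNB (u (k+1)) (u k) (by omega) hlt (by omega)
        · have e1 : P (u k) = w k := by rw [hsplit]; rfl
          have e2 : P (u (k+1)) = w (k+1) := by rw [hsplit]; rfl
          omega
        · simp only [Equiv.Perm.inv_def, Equiv.symm_apply_apply]
          omega
      have humono2 : ∀ k, d + 1 ≤ k → k + 1 ≤ n → u k < u (k+1) := by
        intro k h1 h2
        have hwinc := hinc2 k h1 h2
        by_contra hcon
        push_neg at hcon
        have hne : u k ≠ u (k+1) := fun he => by have := u.injective he; omega
        have hlt : u (k+1) < u k := by omega
        have hb1 := hufix.mem_Icc (k := k) (by omega) (by omega)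
        have hb2 := hufix.mem_Icc (k := k + 1) (by omega) (by omega)
        apply hNB (u (k+1)) (u k) (by omega) hlt (by omega)
        · have e1 : P (u k) = w k := by rw [hsplit]; rfl
          have e2 : P (u (k+1)) = w (k+1) := by rw [hsplit]; rfl
          omega
        · simp only [Equiv.Perm.inv_def, Equiv.symm_apply_apply]
          omega
      -- induction hypothesis applied to Clow
      have hnde_low : ∀ a b, (a, b) ∈ Clow → 2 ≤ a → 2 ≤ b →
          ((a-1, b-1) ∈ Clow ∨ (a-1, b) ∈ Clow ∨ (a, b-1) ∈ Clow) := by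
        intro a b hab h2a h2b
        rw [hClow, Finset.mem_filter] at hab
        have h3 := hnde a b hab.1 h2a h2b
        have hale := hab.2
        simp only [hClow, Finset.mem_filter]
        rcases h3 with h|h|h
        · exact Or.inl ⟨h, by omega⟩
        · exact Or.inr (Or.inl ⟨h, by omega⟩)
        · exact Or.inr (Or.inr ⟨h, by omega⟩)
      have hAlow := ih (by omega) Clow hrow_low hnde_low hredu humono1 humono2
      simp only [← hu] at hAlow
      -- row r of C is downward closed
      have hclosed : ∀ a, (r, a) ∈ C → 2 ≤ a → (r, a - 1) ∈ C := by
        intro a hra h2a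
        by_contra hnot
        set A := D0 + a with hA
        have hrbound := hrow (r, a) hra
        have hAmem : A ∈ rowLettersA d μ C r := by
          rw [mem_rowLettersA]
          exact ⟨a, by omega, by simpa using hrbound.2.2.2, hra, by omega⟩
        have hnotA1 : ∀ x ∈ rowLettersA d μ C r, x ≠ A - 1 := by
          intro x hx
          rw [mem_rowLettersA] at hx
          obtain ⟨j, h1, h2, h3, rfl⟩ := hx
          intro he
          have : j = a - 1 := by omega
          subst this
          exact hnot h3
        have hAbound := hPletters A hAmem
        have hsorted := rowLettersA_sorted d μ C r hrd
        have hclimb : A + 1 ≤ P A := desc_prod_climb hsorted hAmem hnotA1 (by omega)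
        have hPA1 : P (A + 1) = A := desc_prod_succ hsorted hAmem
        set k1 := u⁻¹ A with hk1
        set k2 := u⁻¹ (A + 1) with hk2
        have hb1 := hufix.inv.mem_Icc (k := A) (by omega) (by omega)
        have hb2 := hufix.inv.mem_Icc (k := A + 1) (by omega) (by omega)
        have huk1 : u k1 = A := by rw [hk1]; simp
        have huk2 : u k2 = A + 1 := by rw [hk2]; simp
        have hk12 : k1 < k2 := by
          rcases lt_trichotomy k1 k2 with h|h|h
          · exact h
          · exfalso; rw [hk1, hk2] at h; have := u⁻¹.injective h; omega
          · exfalso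
            exact hNB A (A + 1) (by omega) (by omega) (by omega) (by omega) h
        have hwk1 : w k1 = P A := by rw [hsplit]; simp only [Equiv.Perm.mul_apply, huk1]
        have hwk2 : w k2 = A := by
          rw [hsplit]; simp only [Equiv.Perm.mul_apply, huk2, hPA1]
        have hk1low : D0 + 2 ≤ k1 := by
          by_contra hcon
          push_neg at hcon
          have := hufixlow k1 (by omega)
          omega
        rcases le_or_gt k2 d with hcase|hcase
        · -- both in the first increasing range
          have := mono_adj (f := fun k => w k) (lo := D0) (hi := d)
            (fun k hk1' hk2' => hinc1 k (by omega) hk2') k1 k2 (by omega) hk12 hcase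
          omega
        rcases le_or_gt (d + 1) k1 with hcase1|hcase1
        · have := mono_adj (f := fun k => w k) (lo := d + 1) (hi := n)
            (fun k hk1' hk2' => hinc2 k hk1' hk2') k1 k2 hcase1 hk12 (by omega)
          omega
        -- k1 ≤ d < k2
        have hr2 : 2 ≤ r := by omega
        have hnd := hnde r a hra hr2 h2a
        have hwit : ∃ b0, a - 1 ≤ b0 ∧ (r', b0) ∈ C := by
          rcases hnd with h|h|h
          · exact ⟨a - 1, le_refl _, by convert h using 2 <;> omega⟩
          · exact ⟨a, by omega, by convert h using 2 <;> omega⟩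
          · exact absurd h hnot
        obtain ⟨b0, hb0, hwitmem⟩ := hwit
        have hwitlow : (r', b0) ∈ Clow := by
          rw [hClow, Finset.mem_filter]
          exact ⟨hwitmem, Nat.lt_succ_self r'⟩
        have := (hAlow r' b0).1 hwitlow
        have hpos : d - r' + 1 = D0 + 2 := by omega
        rw [hpos] at this
        -- u (D0+2) ≥ D0 + 2 + b0 ≥ A + 1
        have hub : A + 1 ≤ u (D0 + 2) := by omega
        rcases eq_or_lt_of_le hk1low with he|hlt
        · rw [he] at hub; omega
        · have := mono_adj (f := fun k => u k) (lo := D0 + 1) (hi := d)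
            (fun k hk1' hk2' => humono1 k (by omega) hk2') (D0 + 2) k1 (by omega) hlt
            (by omega)
          omega
      -- row r is an interval [1, c]
      have hint : ∃ c, c ≤ μ r ∧ ∀ j, ((r, j) ∈ C ↔ 1 ≤ j ∧ j ≤ c) := by
        classical
        set colSet := (C.filter (fun p => p.1 = r)).image Prod.snd with hcolSet
        have hmemcol : ∀ j, j ∈ colSet ↔ (r, j) ∈ C := by
          intro j
          rw [hcolSet, Finset.mem_image]
          constructor
          · rintro ⟨p, hp, rfl⟩
            rw [Finset.mem_filter] at hp
            have : p = (r, p.2) := by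
              ext
              · exact hp.2
              · rfl
            rw [← this]; exact hp.1
          · intro h
            exact ⟨(r, j), Finset.mem_filter.2 ⟨h, rfl⟩, rfl⟩
        rcases Finset.eq_empty_or_nonempty colSet with hemp|hne
        · refine ⟨0, by omega, fun j => ⟨fun h => ?_, fun h => by omega⟩⟩
          have : j ∈ colSet := (hmemcol j).2 h
          rw [hemp] at this
          exact absurd this (Finset.notMem_empty _)
        · set c := colSet.max' hne with hc
          have hcmem : (r, c) ∈ C := (hmemcol c).1 (colSet.max'_mem hne)
          have hdown : ∀ t j, (r, j) ∈ C → 1 ≤ j - t → (r, j - t) ∈ C := by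
            intro t
            induction t with
            | zero => intro j h _; simpa using h
            | succ t iht =>
                intro j h hj
                have h1 : (r, j - t) ∈ C := iht j h (by omega)
                have h2 : (r, j - t - 1) ∈ C := hclosed (j - t) h1 (by omega)
                have : j - (t + 1) = j - t - 1 := by omega
                rw [this]
                exact h2
          refine ⟨c, (hrow _ hcmem).2.2.2, fun j => ⟨fun h => ?_, fun h => ?_⟩⟩
          · have h1 := (hrow _ h).2.2.1
            have h2 := colSet.le_max' j ((hmemcol j).2 h)
            omega
          · have := hdown (c - j) c hcmem (by omega)
            have he : c - (c - j) = j := by omega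
            rw [he] at this
            exact this
      obtain ⟨c, hcμ, hcint⟩ := hint
      -- identify P with the cycle
      have hPmem : ∀ x, x ∈ rowLettersA d μ C r ↔ D0 + 1 ≤ x ∧ x ≤ D0 + c := by
        intro x
        rw [mem_rowLettersA]
        constructor
        · rintro ⟨j, h1, h2, h3, rfl⟩
          have := (hcint j).1 h3
          omega
        · rintro ⟨h1, h2⟩
          refine ⟨x - D0, by omega, by omega, ?_, by omega⟩
          have := (hcint (x - D0)).2 (by omega)
          exact this
      have hPcyc : P = cycA D0 c := by
        rw [hP, cycA, desc_interval_eq (rowLettersA_sorted d μ C r hrd) hPmem]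
      -- value of w at position D0 + 1
      have hwtop : w (D0 + 1) = D0 + c + 1 := by
        rw [hsplit]
        simp only [Equiv.Perm.mul_apply]
        rw [hufixlow (D0+1) le_rfl, hPcyc, cycA_top]
      -- u (D0+2) is above the cycle range (when r' ≥ 1)
      have hu2 : 1 ≤ r' → D0 + c + 2 ≤ u (D0 + 2) := by
        intro hr'
        have hge : D0 + 2 ≤ u (D0 + 2) := by
          by_contra hcon
          push_neg at hcon
          have := hufixlow (u (D0+2)) (by omega)
          have := u.injective this
          omega
        rcases Nat.eq_zero_or_pos c with rfl|hc1
        · omega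
        by_contra hcon
        push_neg at hcon
        have hwval : w (D0 + 2) = u (D0 + 2) - 1 := by
          rw [hsplit]
          simp only [Equiv.Perm.mul_apply]
          rw [hPcyc, cycA_mid (by omega) (by omega)]
        have h6 := hinc1 (D0 + 1) (by omega) (by omega)
        have h7 : w (D0 + 1 + 1) = w (D0 + 2) := rfl
        omega
      -- w agrees with u at positions of upper rows
      have hwu : ∀ a, 1 ≤ a → a ≤ r' → w (d - a + 1) = u (d - a + 1) := by
        intro a h1 h2
        have hpos : D0 + 2 ≤ d - a + 1 := by omega
        have hval : D0 + c + 2 ≤ u (d - a + 1) := by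
          rcases eq_or_lt_of_le hpos with he|hlt
          · rw [← he]; exact hu2 (by omega)
          · have h3 := hu2 (by omega)
            have := mono_adj (f := fun k => u k) (lo := D0 + 1) (hi := d)
              (fun k hk1' hk2' => humono1 k (by omega) hk2') (D0 + 2) (d - a + 1)
              (by omega) hlt (by omega)
            omega
        rw [hsplit]
        simp only [Equiv.Perm.mul_apply]
        rw [hPcyc, cycA_high (by omega)]
      -- assemble the final equivalence
      intro a b
      rcases Nat.eq_zero_or_pos a with rfl|ha1
      · constructor
        · intro h; have := hrow _ h; omega
        · intro h; omega
      rcases lt_trichotomy a r with hlt|heq|hgt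
      · -- upper rows
        have hmemlow : (a, b) ∈ C ↔ (a, b) ∈ Clow := by
          rw [hClow, Finset.mem_filter]
          constructor
          · intro h; exact ⟨h, hlt⟩
          · intro h; exact h.1
        rw [hmemlow, hAlow a b]
        have := hwu a ha1 (by omega)
        constructor
        · rintro ⟨x1, x2, x3, x4⟩
          exact ⟨x1, by omega, x3, by omega⟩
        · rintro ⟨x1, x2, x3, x4⟩
          exact ⟨x1, by omega, x3, by omega⟩
      · -- row r
        have e0 : d - r + 1 = D0 + 1 := by omega
        rw [heq, e0, hwtop, hcint b]
        omega
      · -- rows beyond r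
        constructor
        · intro h; have := hrow _ h; simp only at this; omega
        · intro h; omega

/-! ### excitation invariance of the subword product -/

lemma prod_flatMap_perm {α : Type} (l : List α) (g : α → List (Equiv.Perm ℕ)) :
    (l.flatMap g).prod = (l.map (fun a => (g a).prod)).prod := by
  induction l with
  | nil => simp
  | cons x l ih => simp [List.flatMap_cons, List.prod_append, ih]

def blockProdA (d : ℕ) (μ : ℕ → ℕ) (C : Finset (ℕ × ℕ)) (i0 : ℕ) : Equiv.Perm ℕ :=
  (((rowBlockA μ i0).filter (fun p => decide (p ∈ C))).map (fun p => sA (d - p.1 + p.2))).prod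

lemma subPermA_blocks (d : ℕ) (μ : ℕ → ℕ) (C : Finset (ℕ × ℕ)) :
    subPermA d μ C = ((List.range d).reverse.map (blockProdA d μ C)).prod := by
  rw [subPermA, rowBoxesA_eq, List.filter_flatMap, List.map_flatMap, prod_flatMap_perm]
  rfl

lemma range_split3 {t m : ℕ} (h : t < m) :
    List.range m = List.range t ++ [t] ++ (List.range (m - t - 1)).map (fun x => t + 1 + x) := by
  conv_lhs => rw [show m = (t + 1) + (m - t - 1) by omega]
  rw [List.range_add, List.range_succ]

lemma range_split4 {t m : ℕ} (h1 : 1 ≤ t) (h2 : t < m) :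
    List.range m = List.range (t-1) ++ [t-1, t] ++ (List.range (m - t - 1)).map
      (fun x => t + 1 + x) := by
  rw [range_split3 h2, range_split3 (show t - 1 < t by omega)]
  have : t - (t - 1) - 1 = 0 := by omega
  rw [this]
  simp [List.append_assoc]

lemma exc_prod (d : ℕ) (μ : ℕ → ℕ) (C : Finset (ℕ × ℕ)) (i j : ℕ)
    (hi : 1 ≤ i) (hj : 1 ≤ j) (hid : i + 1 ≤ d)
    (hjμ1 : j + 1 ≤ μ (i+1)) (hjμ0 : j + 1 ≤ μ i)
    (hy : (i+1, j+1) ∈ C) (hx : (i, j) ∉ C) (hup : (i, j+1) ∉ C) (hleft : (i+1, j) ∉ C) :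
    subPermA d μ (insert (i, j) (C.erase (i+1, j+1))) = subPermA d μ C := by
  classical
  set C' := insert (i, j) (C.erase (i+1, j+1)) with hC'
  have hmem : ∀ p : ℕ × ℕ, p ≠ (i, j) → p ≠ (i+1, j+1) → (p ∈ C' ↔ p ∈ C) := by
    intro p hp1 hp2
    rw [hC', Finset.mem_insert, Finset.mem_erase]
    constructor
    · rintro (h|h)
      · exact absurd h hp1
      · exact h.2
    · intro h; exact Or.inr ⟨hp2, h⟩
  have hyC' : (i+1, j+1) ∉ C' := by
    rw [hC', Finset.mem_insert, Finset.mem_erase]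
    rintro (h|h)
    · rw [Prod.ext_iff] at h; omega
    · exact h.1 rfl
  have hxC' : (i, j) ∈ C' := Finset.mem_insert_self _ _
  -- block products at rows other than i, i+1 agree
  have hother : ∀ i0, i0 + 1 ≠ i → i0 + 1 ≠ i + 1 →
      blockProdA d μ C' i0 = blockProdA d μ C i0 := by
    intro i0 h1 h2
    unfold blockProdA
    congr 1
    congr 1
    apply List.filter_congr
    intro p hp
    rw [mem_rowBlockA] at hp
    rw [decide_eq_decide]
    apply hmem
    · intro he; rw [he] at hp; simp at hp; omega
    · intro he; rw [he] at hp; simp at hp; omega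
  -- decompose block of row i+1 (index i)
  have hrow1 : rowBlockA μ i =
      (((List.range (μ (i+1) - j - 1)).map (fun x => j + 1 + x)).reverse.map
        (fun c0 => (i+1, c0+1)))
      ++ [(i+1, j+1)]
      ++ ((List.range j).reverse.map (fun c0 => (i+1, c0+1))) := by
    rw [rowBlockA, range_split3 (t := j) (m := μ (i+1)) (by omega)]
    rw [List.reverse_append, List.reverse_append, List.reverse_singleton]
    simp [List.map_append]
  have hrow2 : rowBlockA μ (i-1) =
      (((List.range (μ i - j)).map (fun x => j + x)).reverse.map
        (fun c0 => (i, c0+1)))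
      ++ [(i, j)]
      ++ ((List.range (j-1)).reverse.map (fun c0 => (i, c0+1))) := by
    rw [rowBlockA, show i - 1 + 1 = i by omega,
      range_split3 (t := j - 1) (m := μ i) (by omega)]
    rw [List.reverse_append, List.reverse_append, List.reverse_singleton]
    rw [show μ i - (j - 1) - 1 = μ i - j by omega]
    simp [List.map_append, List.append_assoc, show j - 1 + 1 = j from by omega]
  -- the filtered sublists
  set Hi1 := (((List.range (μ (i+1) - j - 1)).map (fun x => j + 1 + x)).reverse.map
        (fun c0 => (i+1, c0+1))) with hHi1
  set Lo1 := ((List.range j).reverse.map (fun c0 => (i+1, c0+1))) with hLo1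
  set Hi2 := (((List.range (μ i - j)).map (fun x => j + x)).reverse.map
        (fun c0 => (i, c0+1))) with hHi2
  set Lo2 := ((List.range (j-1)).reverse.map (fun c0 => (i, c0+1))) with hLo2
  have hHi1mem : ∀ p ∈ Hi1, p.1 = i + 1 ∧ j + 2 ≤ p.2 := by
    intro p hp
    rw [hHi1] at hp
    simp only [List.mem_map, List.mem_reverse, List.mem_range] at hp
    obtain ⟨c0, ⟨x, hx, rfl⟩, rfl⟩ := hp
    exact ⟨rfl, by omega⟩
  have hLo1mem : ∀ p ∈ Lo1, p.1 = i + 1 ∧ 1 ≤ p.2 ∧ p.2 ≤ j := by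
    intro p hp
    rw [hLo1] at hp
    simp only [List.mem_map, List.mem_reverse, List.mem_range] at hp
    obtain ⟨c0, hc0, rfl⟩ := hp
    refine ⟨rfl, by omega, by omega⟩
  have hHi2mem : ∀ p ∈ Hi2, p.1 = i ∧ j + 1 ≤ p.2 := by
    intro p hp
    rw [hHi2] at hp
    simp only [List.mem_map, List.mem_reverse, List.mem_range] at hp
    obtain ⟨c0, ⟨x, hx, rfl⟩, rfl⟩ := hp
    exact ⟨rfl, by omega⟩
  have hLo2mem : ∀ p ∈ Lo2, p.1 = i ∧ 1 ≤ p.2 ∧ p.2 ≤ j - 1 := by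
    intro p hp
    rw [hLo2] at hp
    simp only [List.mem_map, List.mem_reverse, List.mem_range] at hp
    obtain ⟨c0, hc0, rfl⟩ := hp
    refine ⟨rfl, by omega, by omega⟩
  -- filters agree on the sublists
  have hfHi1 : Hi1.filter (fun p => decide (p ∈ C')) = Hi1.filter (fun p => decide (p ∈ C)) := by
    apply List.filter_congr
    intro p hp
    have := hHi1mem p hp
    rw [decide_eq_decide]
    apply hmem
    · intro he; rw [he] at this; omega
    · intro he; rw [he] at this; omega
  have hfLo1 : Lo1.filter (fun p => decide (p ∈ C')) = Lo1.filter (fun p => decide (p ∈ C)) := by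
    apply List.filter_congr
    intro p hp
    have := hLo1mem p hp
    rw [decide_eq_decide]
    apply hmem
    · intro he; rw [he] at this; omega
    · intro he; rw [he] at this; omega
  have hfHi2 : Hi2.filter (fun p => decide (p ∈ C')) = Hi2.filter (fun p => decide (p ∈ C)) := by
    apply List.filter_congr
    intro p hp
    have := hHi2mem p hp
    rw [decide_eq_decide]
    apply hmem
    · intro he; rw [he] at this; omega
    · intro he; rw [he] at this; omega
  have hfLo2 : Lo2.filter (fun p => decide (p ∈ C')) = Lo2.filter (fun p => decide (p ∈ C)) := by
    apply List.filter_congr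
    intro p hp
    have := hLo2mem p hp
    rw [decide_eq_decide]
    apply hmem
    · intro he; rw [he] at this; omega
    · intro he; rw [he] at this; omega
  -- letters commute
  set k := d - i + j with hk
  have hkalt : d - (i+1) + (j+1) = k := by omega
  have hcommL : ∀ x ∈ (Lo1.filter (fun p => decide (p ∈ C))).map
      (fun p => sA (d - p.1 + p.2)), Commute (sA k) x := by
    intro x hx
    rw [List.mem_map] at hx
    obtain ⟨p, hp, rfl⟩ := hx
    rw [List.mem_filter, decide_eq_true_eq] at hp
    obtain ⟨hp1, hp2⟩ := hp
    have hm := hLo1mem p hp1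
    have hpj : p.2 ≠ j := by
      intro he
      apply hleft
      have hp' : p = (i+1, j) := Prod.ext hm.1 he
      rw [← hp']; exact hp2
    have : d - p.1 + p.2 + 2 ≤ k := by omega
    exact (sA_commute this).symm
  have hcommH : ∀ x ∈ (Hi2.filter (fun p => decide (p ∈ C))).map
      (fun p => sA (d - p.1 + p.2)), Commute (sA k) x := by
    intro x hx
    rw [List.mem_map] at hx
    obtain ⟨p, hp, rfl⟩ := hx
    rw [List.mem_filter, decide_eq_true_eq] at hp
    obtain ⟨hp1, hp2⟩ := hp
    have hm := hHi2mem p hp1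
    have hpj : p.2 ≠ j + 1 := by
      intro he
      apply hup
      have hp' : p = (i, j+1) := Prod.ext hm.1 he
      rw [← hp']; exact hp2
    have : k + 2 ≤ d - p.1 + p.2 := by omega
    exact sA_commute this
  -- the two middle block products
  have hmid : blockProdA d μ C' i * blockProdA d μ C' (i-1)
      = blockProdA d μ C i * blockProdA d μ C (i-1) := by
    unfold blockProdA
    rw [hrow1, hrow2]
    simp only [List.filter_append, List.map_append, List.prod_append]
    rw [hfHi1, hfLo1, hfHi2, hfLo2]
    have hmidC1 : [(i+1, j+1)].filter (fun p => decide (p ∈ C)) = [(i+1, j+1)] := by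
      simp [hy]
    have hmidC1' : [(i+1, j+1)].filter (fun p => decide (p ∈ C')) = [] := by
      simp [hyC']
    have hmidC2 : [(i, j)].filter (fun p => decide (p ∈ C)) = [] := by
      simp [hx]
    have hmidC2' : [(i, j)].filter (fun p => decide (p ∈ C')) = [(i, j)] := by
      simp [hxC']
    rw [hmidC1, hmidC1', hmidC2, hmidC2']
    simp only [List.map_cons, List.map_nil, List.prod_cons, List.prod_nil, mul_one, one_mul]
    rw [hkalt]
    set A := ((Hi1.filter (fun p => decide (p ∈ C))).map (fun p => sA (d - p.1 + p.2))).prod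
    set L := ((Lo1.filter (fun p => decide (p ∈ C))).map (fun p => sA (d - p.1 + p.2))).prod
    set H := ((Hi2.filter (fun p => decide (p ∈ C))).map (fun p => sA (d - p.1 + p.2))).prod
    set Z := ((Lo2.filter (fun p => decide (p ∈ C))).map (fun p => sA (d - p.1 + p.2))).prod
    have hcL : Commute (sA k) L := Commute.list_prod_right _ _ hcommL
    have hcH : Commute (sA k) H := Commute.list_prod_right _ _ hcommH
    simp only [mul_assoc]
    congr 1
    rw [← mul_assoc H, ← hcH.eq, mul_assoc, ← mul_assoc L, ← hcL.eq, mul_assoc]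
  -- assemble
  rw [subPermA_blocks, subPermA_blocks]
  rw [range_split4 (t := i) hi (by omega)]
  rw [List.reverse_append, List.reverse_append]
  simp only [List.reverse_cons, List.reverse_nil, List.nil_append, List.map_append,
    List.prod_append, List.map_cons, List.prod_cons, List.map_nil, List.prod_nil, mul_one,
    List.singleton_append]
  have houter1 : ((List.map (fun x => i + 1 + x) (List.range (d - i - 1))).reverse.map
      (blockProdA d μ C')) = ((List.map (fun x => i + 1 + x)
        (List.range (d - i - 1))).reverse.map (blockProdA d μ C)) := by
    apply List.map_congr_left
    intro i0 hi0
    simp only [List.mem_reverse, List.mem_map, List.mem_range] at hi0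
    obtain ⟨t, ht, rfl⟩ := hi0
    exact hother _ (by omega) (by omega)
  have houter2 : ((List.range (i-1)).reverse.map (blockProdA d μ C'))
      = ((List.range (i-1)).reverse.map (blockProdA d μ C)) := by
    apply List.map_congr_left
    intro i0 hi0
    simp only [List.mem_reverse, List.mem_range] at hi0
    exact hother _ (by omega) (by omega)
  rw [houter1, houter2]
  rw [hmid]


/-- Every `C ∈ R_v(w)` other than the ground state `D_λ` is
obtained from some other element `C' ∈ R_v(w)` by a sequence of elementary
excitations. -/
theorem stmt2 (n d : ℕ) (hd : 1 ≤ d) (hdn : d ≤ n) (w v : Equiv.Perm ℕ)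
    (hw : IsGrassA n d w) (hv : IsGrassA n d v)
    (hsub : ∀ j, lamA d w j ≤ lamA d v j)
    (C : Finset (ℕ × ℕ))
    (hC : C ∈ RSetA n d v w) (hne : C ≠ YDA d (lamA d w)) :
    ∃ C' ∈ RSetA n d v w, C' ≠ C ∧
      Relation.ReflTransGen (ElemExcA (YDA d (lamA d v))) C' C := by
  classical
  obtain ⟨hsubD, hcard, hperm⟩ := hC
  set μ := lamA d v with hμdef
  have hv0 : v 0 = 0 := hv.1 0 (Or.inl rfl)
  have hvbig : ∀ k, n < k → v k = k := fun k hk => hv.1 k (Or.inr hk)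
  have hvle : ∀ k, k ≤ n → v k ≤ n := by
    intro k hk
    by_contra hcon
    push_neg at hcon
    have h1 : v (v k) = v k := hvbig _ hcon
    have := v.injective h1
    omega
  have hμval : ∀ i, 1 ≤ i → i ≤ d → μ i = v (d - i + 1) - (d - i + 1) := by
    intro i h1 h2
    rw [hμdef]
    simp [lamA, h1, h2]
  have hμbound : ∀ i j, 1 ≤ i → i ≤ d → 1 ≤ j → j ≤ μ i → d - i + j < n := by
    intro i j h1 h2 h3 h4
    rw [hμval i h1 h2] at h4
    have hvn := hvle (d - i + 1) (by omega)
    omega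
  have hμdec : ∀ i, 1 ≤ i → i + 1 ≤ d → μ (i+1) ≤ μ i := by
    intro i h1 h2
    rw [hμval i h1 (by omega), hμval (i+1) (by omega) h2]
    have hlt := hv.2.1 (d - i) (d - i + 1) (by omega) (by omega) (by omega)
    have e : d - (i+1) + 1 = d - i := by omega
    rw [e]
    omega
  have hrow : ∀ p ∈ C, 1 ≤ p.1 ∧ p.1 ≤ d ∧ 1 ≤ p.2 ∧ p.2 ≤ μ p.1 := by
    intro p hp
    have := hsubD hp
    rw [hμdef] at *
    rw [mem_YDA] at this
    exact this
  have hw0 : w 0 = 0 := hw.1 0 (Or.inl rfl)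
  have hw1 : 1 ≤ w 1 := by
    rcases Nat.eq_zero_or_pos (w 1) with h|h
    · have : w 1 = w 0 := by rw [h, hw0]
      have := w.injective this
      omega
    · exact h
  have hinc1 : ∀ k, d ≤ k + d → k + 1 ≤ d → w k < w (k+1) := by
    intro k _ h2
    rcases Nat.eq_zero_or_pos k with rfl|hk
    · simp only [hw0, zero_add]; omega
    · exact hw.2.1 k (k+1) hk (by omega) h2
  have hinc2 : ∀ k, d + 1 ≤ k → k + 1 ≤ n → w k < w (k+1) := by
    intro k h1 h2
    exact hw.2.2 k (k+1) h1 (by omega) h2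
  by_cases hnde : ∀ a b, (a, b) ∈ C → 2 ≤ a → 2 ≤ b →
      ((a-1, b-1) ∈ C ∨ (a-1, b) ∈ C ∨ (a, b-1) ∈ C)
  · -- no de-excitable box : C is the ground state, contradiction
    exfalso
    apply hne
    have hrig := rigidity n d μ hdn hμbound d le_rfl C hrow hnde
      (by rw [hperm]; exact hcard)
      (by rw [hperm]; exact hinc1)
      (by rw [hperm]; exact hinc2)
    apply Finset.ext
    intro p
    have hiff := hrig p.1 p.2
    rw [hperm] at hiff
    rw [mem_YDA]
    constructor
    · intro hp
      have h2 := hiff.1 (by simpa using hp)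
      refine ⟨h2.1, h2.2.1, h2.2.2.1, ?_⟩
      rw [lamA, if_pos ⟨h2.1, h2.2.1⟩]
      omega
    · rintro ⟨h1, h2, h3, h4⟩
      rw [lamA, if_pos ⟨h1, h2⟩] at h4
      have h5 := hiff.2 ⟨h1, h2, h3, by omega⟩
      simpa using h5
  · push_neg at hnde
    obtain ⟨a, b, hab, h2a, h2b, hno1, hno2, hno3⟩ := hnde
    have hboundsab := hrow (a, b) hab
    simp only at hboundsab
    have ea : a - 1 + 1 = a := by omega
    have eb : b - 1 + 1 = b := by omega
    set C' := insert (a-1, b-1) (C.erase (a, b)) with hC'def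
    have hba : b ≤ μ (a-1) := by
      have h := hμdec (a-1) (by omega) (by rw [ea]; omega)
      rw [ea] at h
      omega
    have hprodeq : subPermA d μ C' = subPermA d μ C := by
      have h := exc_prod d μ C (a-1) (b-1) (by omega) (by omega)
        (by rw [ea]; omega)
        (by rw [ea, eb]; omega)
        (by rw [eb]; exact hba)
        (by rw [ea, eb]; exact hab)
        hno1
        (by rw [eb]; exact hno2)
        (by rw [ea]; exact hno3)
      rw [ea, eb] at h
      rw [hC'def]
      exact h
    have hxnotC : (a-1, b-1) ∉ C.erase (a, b) := by
      rw [Finset.mem_erase]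
      rintro ⟨-, h⟩
      exact hno1 h
    have hcard' : C'.card = C.card := by
      rw [hC'def, Finset.card_insert_of_notMem hxnotC, Finset.card_erase_of_mem hab]
      have : 1 ≤ C.card := Finset.card_pos.2 ⟨_, hab⟩
      omega
    have hmemC' : ∀ p : ℕ × ℕ, p ∈ C' ↔ (p = (a-1, b-1) ∨ (p ∈ C ∧ p ≠ (a, b))) := by
      intro p
      rw [hC'def, Finset.mem_insert, Finset.mem_erase]
      tauto
    refine ⟨C', ⟨?_, ?_, ?_⟩, ?_, ?_⟩
    · -- C' ⊆ D
      intro p hp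
      rw [hmemC'] at hp
      rcases hp with rfl|⟨hp, -⟩
      · rw [← hμdef, mem_YDA]
        simp only
        omega
      · exact hsubD hp
    · rw [hcard']; exact hcard
    · rw [← hμdef, hprodeq]; exact hperm
    · -- C' ≠ C
      intro he
      have : (a, b) ∈ C' := by rw [he]; exact hab
      rw [hmemC'] at this
      rcases this with h|⟨-, h⟩
      · rw [Prod.ext_iff] at h; simp only at h; omega
      · exact h rfl
    · -- one elementary excitation
      apply Relation.ReflTransGen.single
      refine ⟨a - 1, b - 1, Finset.mem_insert_self _ _, ?_, ?_, ?_, ?_, ?_, ?_, ?_⟩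
      · rw [ea, mem_YDA]
        simp only
        omega
      · rw [eb, mem_YDA]
        simp only
        refine ⟨by omega, by omega, by omega, hba⟩
      · rw [ea, eb]
        exact hsubD hab
      · rw [ea, hmemC']
        rintro (h|⟨h, -⟩)
        · rw [Prod.ext_iff] at h; simp only at h; omega
        · exact hno3 h
      · rw [eb, hmemC']
        rintro (h|⟨h, -⟩)
        · rw [Prod.ext_iff] at h; simp only at h; omega
        · exact hno2 h
      · rw [ea, eb, hmemC']
        rintro (h|⟨-, h⟩)
        · rw [Prod.ext_iff] at h; simp only at h; omega
        · exact h rfl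
      · rw [ea, eb, hC'def, Finset.erase_insert hxnotC]
        exact (Finset.insert_erase hab).symm
end

section
/- Let λ be a partition with at most d parts, and choose n ≥ d such that λ_1 ≤ n − d. Define w ∈ S_n by w(i) = λ_{d−i+1} + i for 1 ≤ i ≤ d and w(d+j) = d + j − λ′_j for 1 ≤ j ≤ n−d, where λ′ is the conjugate partition of λ. Then s_λ^{(d)}(a_λ | a) = ∏_{(i,j) ∈ D_λ} (a_{w(d−i+1)} − a_{w(d+j)}), as polynomials in the parameters a_i. -/
open MvPolynomial

/-- In `ℤ[x_1, x_2, …; a_1, a_2, …]`: the variable `x_j`. -/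
noncomputable def xVar (j : ℕ) : MvPolynomial (ℕ ⊕ ℕ) ℤ := X (Sum.inl j)

/-- In `ℤ[x_1, x_2, …; a_1, a_2, …]`: the parameter `a_m`. -/
noncomputable def aVar (m : ℕ) : MvPolynomial (ℕ ⊕ ℕ) ℤ := X (Sum.inr m)

/-- `(z|a)^k = (z - a_1)(z - a_2) ⋯ (z - a_k)`. -/
noncomputable def fallA (z : MvPolynomial (ℕ ⊕ ℕ) ℤ) (k : ℕ) : MvPolynomial (ℕ ⊕ ℕ) ℤ :=
  ∏ m ∈ Finset.Icc 1 k, (z - aVar m)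

/-- The Vandermonde product `∏_{1 ≤ i < j ≤ d} (x_i - x_j)`. -/
noncomputable def vandA (d : ℕ) : MvPolynomial (ℕ ⊕ ℕ) ℤ :=
  ∏ p ∈ Finset.univ.filter (fun p : Fin d × Fin d => p.1 < p.2),
    (xVar ((p.1 : ℕ) + 1) - xVar ((p.2 : ℕ) + 1))

/-- The numerator `det((x_j|a)^{λ_i + d - i})_{1 ≤ i,j ≤ d}` of the factorial Schur
polynomial `s_λ^{(d)}(x|a)`; thus `s_λ^{(d)}(x|a)` is the unique polynomial `S` with
`vandA d * S = schurNumA d λ` (the parts of `λ` are `λ 1 ≥ λ 2 ≥ ⋯ ≥ λ d`). -/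
noncomputable def schurNumA (d : ℕ) (l : ℕ → ℕ) : MvPolynomial (ℕ ⊕ ℕ) ℤ :=
  Matrix.det (Matrix.of fun p q : Fin d =>
    fallA (xVar ((q : ℕ) + 1)) (l ((p : ℕ) + 1) + d - ((p : ℕ) + 1)))

/-! ### Auxiliary machinery -/

abbrev RR : Type := MvPolynomial (ℕ ⊕ ℕ) ℤ

section Aux
variable {d : ℕ} {lam : ℕ → ℕ}

/-- The conjugate partition. -/
def conjA (d : ℕ) (lam : ℕ → ℕ) (j : ℕ) : ℕ :=
  ((Finset.Icc 1 d).filter fun i => j ≤ lam i).card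

/-- `e k = λ_k + d - k + 1`. -/
def eA (d : ℕ) (lam : ℕ → ℕ) (k : ℕ) : ℕ := lam k + (d - k) + 1
/-- `g j = d + j - λ'_j`. -/
def gA (d : ℕ) (lam : ℕ → ℕ) (j : ℕ) : ℕ := d + j - conjA d lam j

lemma lam_anti (hlam : ∀ i, 1 ≤ i → lam (i + 1) ≤ lam i) {k m : ℕ}
    (hk : 1 ≤ k) (hkm : k ≤ m) : lam m ≤ lam k := by
  induction m, hkm using Nat.le_induction with
  | base => exact le_rfl
  | succ m hm ih => exact le_trans (hlam m (le_trans hk hm)) ih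

lemma conjA_le (j : ℕ) : conjA d lam j ≤ d := by
  have h := Finset.card_filter_le (Finset.Icc 1 d) (fun i => j ≤ lam i)
  simpa [conjA] using h

lemma conjA_anti {j1 j2 : ℕ} (h : j1 ≤ j2) : conjA d lam j2 ≤ conjA d lam j1 :=
  Finset.card_le_card (Finset.monotone_filter_right _ (fun i _ hi => le_trans h hi))

lemma conjA_ge (hlam : ∀ i, 1 ≤ i → lam (i + 1) ≤ lam i) {m j : ℕ}
    (hm1 : 1 ≤ m) (hmd : m ≤ d) (hj : j ≤ lam m) : m ≤ conjA d lam j := by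
  have hsub : Finset.Icc 1 m ⊆ (Finset.Icc 1 d).filter fun i => j ≤ lam i := by
    intro i hi
    simp only [Finset.mem_Icc] at hi
    simp only [Finset.mem_filter, Finset.mem_Icc]
    exact ⟨⟨hi.1, le_trans hi.2 hmd⟩, le_trans hj (lam_anti hlam hi.1 hi.2)⟩
  have := Finset.card_le_card hsub
  simpa [conjA] using this

lemma conjA_lt (hlam : ∀ i, 1 ≤ i → lam (i + 1) ≤ lam i) {m j : ℕ}
    (hm1 : 1 ≤ m) (hj : lam m < j) : conjA d lam j < m := by
  have hsub : (Finset.Icc 1 d).filter (fun i => j ≤ lam i) ⊆ Finset.Icc 1 (m - 1) := by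
    intro i hi
    simp only [Finset.mem_filter, Finset.mem_Icc] at hi
    have : i < m := by
      by_contra h
      push_neg at h
      exact absurd (le_trans hi.2 (lam_anti hlam hm1 h)) (by omega)
    simp only [Finset.mem_Icc]; omega
  have := Finset.card_le_card hsub
  simp only [Nat.card_Icc] at this
  unfold conjA
  omega

lemma eA_lt (hlam : ∀ i, 1 ≤ i → lam (i + 1) ≤ lam i) {k m : ℕ}
    (hk1 : 1 ≤ k) (hkm : k < m) (hmd : m ≤ d) : eA d lam m < eA d lam k := by
  have := lam_anti hlam hk1 (le_of_lt hkm)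
  unfold eA; omega

lemma gA_lt {j1 j2 : ℕ} (h12 : j1 < j2) : gA d lam j1 < gA d lam j2 := by
  have h1 := conjA_anti (d := d) (lam := lam) (le_of_lt h12)
  have h2 := conjA_le (d := d) (lam := lam) j1
  unfold gA; omega

lemma eA_ne_gA (hlam : ∀ i, 1 ≤ i → lam (i + 1) ≤ lam i) {m j : ℕ}
    (hm1 : 1 ≤ m) (hmd : m ≤ d) : eA d lam m ≠ gA d lam j := by
  rcases le_or_gt j (lam m) with h | h
  · have h1 := conjA_ge hlam hm1 hmd h
    have h2 := conjA_le (d := d) (lam := lam) j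
    unfold eA gA; omega
  · have h1 := conjA_lt (d := d) hlam hm1 h
    have h2 := conjA_le (d := d) (lam := lam) j
    unfold eA gA; omega

lemma injOn_eA (hlam : ∀ i, 1 ≤ i → lam (i + 1) ≤ lam i) {k : ℕ} (hk1 : 1 ≤ k) :
    Set.InjOn (eA d lam) (Finset.Icc (k+1) d) := by
  intro a ha b hb hab
  simp only [Finset.coe_Icc, Set.mem_Icc] at ha hb
  rcases lt_trichotomy a b with h | h | h
  · exact absurd hab (ne_of_gt (eA_lt hlam (by omega) h hb.2))
  · exact h
  · exact absurd hab (ne_of_lt (eA_lt hlam (by omega) h ha.2))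

lemma injOn_gA {s : Set ℕ} : Set.InjOn (gA d lam) s := by
  intro a _ b _ hab
  rcases lt_trichotomy a b with h | h | h
  · exact absurd hab (ne_of_lt (gA_lt h))
  · exact h
  · exact absurd hab (ne_of_gt (gA_lt h))

lemma compl_disj (hlam : ∀ i, 1 ≤ i → lam (i + 1) ≤ lam i) {k : ℕ}
    (hk1 : 1 ≤ k) (hkd : k ≤ d) :
    Disjoint ((Finset.Icc (k+1) d).image (eA d lam))
      ((Finset.Icc 1 (lam k)).image (gA d lam)) := by
  rw [Finset.disjoint_left]
  rintro x hx hy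
  simp only [Finset.mem_image, Finset.mem_Icc] at hx hy
  obtain ⟨m, hm, rfl⟩ := hx
  obtain ⟨j, hj, hje⟩ := hy
  exact eA_ne_gA hlam (by omega) hm.2 hje.symm

lemma compl_set (hlam : ∀ i, 1 ≤ i → lam (i + 1) ≤ lam i) {k : ℕ}
    (hk1 : 1 ≤ k) (hkd : k ≤ d) :
    ((Finset.Icc (k+1) d).image (eA d lam)) ∪ ((Finset.Icc 1 (lam k)).image (gA d lam))
      = Finset.Icc 1 (lam k + (d - k)) := by
  apply Finset.eq_of_subset_of_card_le
  · intro x hx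
    simp only [Finset.mem_union, Finset.mem_image, Finset.mem_Icc] at hx ⊢
    rcases hx with ⟨m, hm, rfl⟩ | ⟨j, hj, rfl⟩
    · have := lam_anti hlam hk1 (show k ≤ m by omega)
      unfold eA; omega
    · have h1 := conjA_ge hlam hk1 hkd hj.2
      have h2 := conjA_le (d := d) (lam := lam) j
      unfold gA; omega
  · rw [Finset.card_union_of_disjoint (compl_disj hlam hk1 hkd),
      Finset.card_image_of_injOn (injOn_eA hlam hk1),
      Finset.card_image_of_injOn injOn_gA, Nat.card_Icc, Nat.card_Icc, Nat.card_Icc]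
    omega

lemma prod_compl (hlam : ∀ i, 1 ≤ i → lam (i + 1) ≤ lam i) {k : ℕ}
    (hk1 : 1 ≤ k) (hkd : k ≤ d) (f : ℕ → RR) :
    ∏ m ∈ Finset.Icc 1 (lam k + (d - k)), f m
      = (∏ m ∈ Finset.Icc (k+1) d, f (eA d lam m))
        * ∏ j ∈ Finset.Icc 1 (lam k), f (gA d lam j) := by
  rw [← compl_set hlam hk1 hkd, Finset.prod_union (compl_disj hlam hk1 hkd),
    Finset.prod_image (fun a ha b hb hab => injOn_gA (by exact ha) (by exact hb) hab),
    Finset.prod_image (fun a ha b hb hab =>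
      injOn_eA hlam hk1 (by simpa using ha) (by simpa using hb) hab)]

end Aux

section Pairs

/-- The set of pairs `i < j` in `Fin d × Fin d`. -/
def pairsF (d : ℕ) : Finset (Fin d × Fin d) :=
  Finset.univ.filter fun p : Fin d × Fin d => p.1 < p.2

variable {M : Type*} [CommMonoid M]

lemma pairs_biUnion (d : ℕ) :
    pairsF d = Finset.univ.biUnion (fun i : Fin d => (Finset.Ioi i).image fun j => (i, j)) := by
  ext p
  simp only [pairsF, Finset.mem_filter, Finset.mem_univ, true_and, Finset.mem_biUnion,
    Finset.mem_image, Finset.mem_Ioi]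
  constructor
  · intro h; exact ⟨p.1, p.2, h, rfl⟩
  · rintro ⟨i, j, hij, rfl⟩; exact hij

lemma prod_pairs {d : ℕ} (F : Fin d × Fin d → M) :
    ∏ p ∈ pairsF d, F p = ∏ i : Fin d, ∏ j ∈ Finset.Ioi i, F (i, j) := by
  rw [pairs_biUnion, Finset.prod_biUnion]
  · refine Finset.prod_congr rfl fun i _ => ?_
    rw [Finset.prod_image]
    intro a _ b _ hab
    simpa using congrArg Prod.snd hab
  · intro i _ i' _ hne
    simp only [Function.onFun]
    rw [Finset.disjoint_left]
    rintro x hx hx'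
    simp only [Finset.mem_image, Finset.mem_Ioi] at hx hx'
    obtain ⟨j, _, rfl⟩ := hx
    obtain ⟨j', _, h⟩ := hx'
    exact hne (congrArg Prod.fst h).symm

lemma prod_pairs_rev {d : ℕ} (F : Fin d × Fin d → M) :
    ∏ p ∈ pairsF d, F p = ∏ p ∈ pairsF d, F (p.2.rev, p.1.rev) := by
  refine Finset.prod_nbij' (fun p => (p.2.rev, p.1.rev)) (fun p => (p.2.rev, p.1.rev))
    ?_ ?_ ?_ ?_ ?_ <;>
    simp only [pairsF, Finset.mem_filter, Finset.mem_univ, true_and]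
  · intro a ha; simpa [Fin.rev_lt_rev] using ha
  · intro a ha; simpa [Fin.rev_lt_rev] using ha
  · intro a _; simp [Fin.rev_rev]
  · intro a _; simp [Fin.rev_rev]
  · intro a _; simp [Fin.rev_rev]

lemma prod_neg' {α : Type*} {R : Type*} [CommRing R] (s : Finset α) (f : α → R) :
    ∏ x ∈ s, (-f x) = (-1) ^ s.card * ∏ x ∈ s, f x := by
  rw [← Finset.prod_const, ← Finset.prod_mul_distrib]
  exact Finset.prod_congr rfl fun x _ => by ring

lemma prod_Icc_fin {d : ℕ} (hd : 1 ≤ d) (f : ℕ → M) :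
    ∏ k ∈ Finset.Icc 1 d, f k = ∏ i : Fin d, f ((i : ℕ) + 1) := by
  refine Finset.prod_nbij' (fun k => (⟨min (k-1) (d-1), by omega⟩ : Fin d))
    (fun i => (i : ℕ) + 1) (fun a _ => Finset.mem_univ _) ?_ ?_ ?_ ?_
  · intro i _; simp only [Finset.mem_Icc]; omega
  · intro a ha; simp only [Finset.mem_Icc] at ha; simp; omega
  · intro i _; apply Fin.ext; simp; omega
  · intro a ha
    simp only [Finset.mem_Icc] at ha
    have : min (a - 1) (d - 1) + 1 = a := by omega
    rw [this]

lemma prod_Icc_fin_rev {d : ℕ} (hd : 1 ≤ d) (f : ℕ → M) :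
    ∏ k ∈ Finset.Icc 1 d, f k = ∏ i : Fin d, f (d - (i : ℕ)) := by
  refine Finset.prod_nbij' (fun k => (⟨min (d - k) (d-1), by omega⟩ : Fin d))
    (fun i => d - (i : ℕ)) (fun a _ => Finset.mem_univ _) ?_ ?_ ?_ ?_
  · intro i _; simp only [Finset.mem_Icc]; have := i.isLt; omega
  · intro a ha; simp only [Finset.mem_Icc] at ha; simp; omega
  · intro i _; apply Fin.ext; simp; have := i.isLt; omega
  · intro a ha
    simp only [Finset.mem_Icc] at ha
    have : d - (min (d - a) (d - 1)) = a := by omega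
    simp only [this]

lemma prod_Icc_inner_fin {d : ℕ} (k : ℕ) (hk : 1 ≤ k) (hkd : k ≤ d) (f : ℕ → M)
    (i : Fin d) (hi : (i : ℕ) = k - 1) :
    ∏ m ∈ Finset.Icc (k+1) d, f m = ∏ j ∈ Finset.Ioi i, f ((j : ℕ) + 1) := by
  refine Finset.prod_nbij' (fun m => (⟨min (m-1) (d-1), by omega⟩ : Fin d))
    (fun j => (j : ℕ) + 1) ?_ ?_ ?_ ?_ ?_
  · intro a ha; simp only [Finset.mem_Icc] at ha
    simp only [Finset.mem_Ioi, Fin.lt_def]; omega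
  · intro j hj; simp only [Finset.mem_Ioi, Fin.lt_def] at hj
    simp only [Finset.mem_Icc]; have := j.isLt; omega
  · intro a ha; simp only [Finset.mem_Icc] at ha; simp; omega
  · intro j hj; simp only [Finset.mem_Ioi, Fin.lt_def] at hj
    apply Fin.ext; simp; have := j.isLt; omega
  · intro a ha; simp only [Finset.mem_Icc] at ha
    have : min (a - 1) (d - 1) + 1 = a := by omega
    rw [this]

lemma prod_pairs_Icc {d : ℕ} (hd : 1 ≤ d) (h : ℕ → ℕ → M) :
    ∏ k ∈ Finset.Icc 1 d, ∏ m ∈ Finset.Icc (k+1) d, h k m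
      = ∏ p ∈ pairsF d, h ((p.1 : ℕ) + 1) ((p.2 : ℕ) + 1) := by
  rw [prod_pairs (fun p : Fin d × Fin d => h ((p.1 : ℕ) + 1) ((p.2 : ℕ) + 1)),
    prod_Icc_fin hd]
  refine Finset.prod_congr rfl fun i _ => ?_
  exact prod_Icc_inner_fin ((i : ℕ) + 1) (by omega) i.isLt (h ((i : ℕ) + 1)) i (by omega)

end Pairs

lemma sign_rev_eq (d : ℕ) :
    ((Equiv.Perm.sign (Fin.revPerm : Equiv.Perm (Fin d)) : ℤ) : RR)
      = (-1) ^ (pairsF d).card := by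
  set v : Fin d → RR := fun i => X (Sum.inr (i : ℕ)) with hv
  have h1 : ((Matrix.vandermonde v).submatrix Fin.revPerm id)
      = Matrix.vandermonde (v ∘ Fin.rev) := by
    ext i j
    simp [Matrix.vandermonde]
  have h2 := Matrix.det_permute (Fin.revPerm) (Matrix.vandermonde v)
  rw [h1, Matrix.det_vandermonde, Matrix.det_vandermonde] at h2
  rw [← prod_pairs (fun p => (v ∘ Fin.rev) p.2 - (v ∘ Fin.rev) p.1),
    ← prod_pairs (fun p => v p.2 - v p.1)] at h2
  rw [prod_pairs_rev (fun p => (v ∘ Fin.rev) p.2 - (v ∘ Fin.rev) p.1)] at h2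
  simp only [Function.comp, Fin.rev_rev] at h2
  have h3 : ∏ p ∈ pairsF d, (v p.1 - v p.2)
      = (-1) ^ (pairsF d).card * ∏ p ∈ pairsF d, (v p.2 - v p.1) := by
    rw [← prod_neg']
    exact Finset.prod_congr rfl fun p _ => by ring
  rw [h3] at h2
  have hP : ∏ p ∈ pairsF d, (v p.2 - v p.1) ≠ 0 := by
    rw [Finset.prod_ne_zero_iff]
    intro p hp
    simp only [pairsF, Finset.mem_filter] at hp
    apply sub_ne_zero_of_ne
    intro h
    have h4 := MvPolynomial.X_injective h
    have h5 : (p.2 : ℕ) = (p.1 : ℕ) := by simpa using h4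
    have h6 : p.1 < p.2 := hp.2
    rw [Fin.lt_def] at h6
    omega
  exact (mul_right_cancel₀ hP h2).symm

/-- `s_λ^{(d)}(a_λ | a) = ∏_{(i,j) ∈ D_λ} (a_{w(d-i+1)} - a_{w(d+j)})`,
where `w ∈ S_n` is given by `w(i) = λ_{d-i+1} + i` for `1 ≤ i ≤ d` and
`w(d+j) = d + j - λ'_j` for `1 ≤ j ≤ n-d` (`λ'` the conjugate partition).
Here `s_λ^{(d)}` is encoded as the unique polynomial `S` with
`vandA d * S = schurNumA d λ`, and `x_j ↦ a_{λ_{d-j+1}+j}` is the evaluation at `a_λ`. -/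
theorem stmt9 (d n : ℕ) (hd : 1 ≤ d) (hdn : d ≤ n) (lam : ℕ → ℕ)
    (hlam : ∀ i, 1 ≤ i → lam (i + 1) ≤ lam i) (hlam0 : ∀ i, d < i → lam i = 0)
    (hlam1 : lam 1 ≤ n - d)
    (w : ℕ → ℕ)
    (hw1 : ∀ i, 1 ≤ i → i ≤ d → w i = lam (d - i + 1) + i)
    (hw2 : ∀ j, 1 ≤ j → j ≤ n - d →
      w (d + j) = d + j - ((Finset.Icc 1 d).filter fun i => j ≤ lam i).card)
    (S : MvPolynomial (ℕ ⊕ ℕ) ℤ) (hS : vandA d * S = schurNumA d lam) :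
    aeval (Sum.elim (fun j => aVar (lam (d - j + 1) + j)) aVar) S =
      ∏ b ∈ YDA d lam, (aVar (w (d - b.1 + 1)) - aVar (w (d + b.2))) := by
  classical
  set c := (pairsF d).card with hc
  have hc2 : ((-1 : RR) ^ c) * ((-1 : RR) ^ c) = 1 := by
    rw [← mul_pow]; norm_num
  set φ : RR →ₐ[ℤ] RR := aeval (Sum.elim (fun j => aVar (lam (d - j + 1) + j)) aVar) with hφ
  set N : Matrix (Fin d) (Fin d) RR :=
    (Matrix.of fun p q : Fin d =>
      fallA (xVar ((q : ℕ) + 1)) (lam ((p : ℕ) + 1) + d - ((p : ℕ) + 1))).map φ with hN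
  -- entries of N
  have hNentry : ∀ p q : Fin d, N p q
      = ∏ m ∈ Finset.Icc 1 (lam ((p : ℕ) + 1) + (d - ((p : ℕ) + 1))),
          (aVar (eA d lam (d - (q : ℕ))) - aVar m) := by
    intro p q
    have hp := p.isLt; have hq := q.isLt
    have h1 : lam ((p : ℕ) + 1) + d - ((p : ℕ) + 1)
        = lam ((p : ℕ) + 1) + (d - ((p : ℕ) + 1)) := by omega
    have h2 : d - ((q : ℕ) + 1) + 1 = d - (q : ℕ) := by omega
    have h3 : eA d lam (d - (q : ℕ)) = lam (d - (q : ℕ)) + ((q : ℕ) + 1) := by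
      unfold eA; omega
    simp only [hN, Matrix.map_apply, Matrix.of_apply, fallA, map_prod, map_sub, hφ, xVar,
      aVar, aeval_X, Sum.elim_inl, Sum.elim_inr, h1, h2, h3]
  -- triangularity
  have hTri : (N.submatrix (Fin.revPerm) id).BlockTriangular id := by
    intro p q hqp
    simp only [id] at hqp
    rw [Matrix.submatrix_apply, id, Fin.revPerm_apply, hNentry]
    apply Finset.prod_eq_zero (i := eA d lam (d - (q : ℕ)))
    · have hp := p.isLt; have hq := q.isLt
      have hqp' : (q : ℕ) < (p : ℕ) := hqp
      have hrev : ((p.rev : ℕ)) = d - ((p : ℕ) + 1) := Fin.val_rev p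
      have h4 : (p.rev : ℕ) + 1 = d - (p : ℕ) := by omega
      rw [h4]
      simp only [Finset.mem_Icc]
      have hla : lam (d - (q : ℕ)) ≤ lam (d - (p : ℕ)) :=
        lam_anti hlam (by omega) (by omega)
      unfold eA
      omega
    · exact sub_self _
  have hdet1 : (N.submatrix (Fin.revPerm) id).det = ∏ p : Fin d, N (p.rev) p := by
    rw [Matrix.det_of_upperTriangular hTri]
    exact Finset.prod_congr rfl fun p _ => by
      rw [Matrix.submatrix_apply, Fin.revPerm_apply]; rfl
  -- diagonal entries
  have hdiag : ∀ p : Fin d, N (p.rev) p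
      = (∏ m ∈ Finset.Icc ((d - (p : ℕ)) + 1) d,
          (aVar (eA d lam (d - (p : ℕ))) - aVar (eA d lam m)))
        * ∏ j ∈ Finset.Icc 1 (lam (d - (p : ℕ))),
            (aVar (eA d lam (d - (p : ℕ))) - aVar (gA d lam j)) := by
    intro p
    rw [hNentry]
    have hp := p.isLt
    have hrev : ((p.rev : ℕ)) = d - ((p : ℕ) + 1) := Fin.val_rev p
    have h4 : (p.rev : ℕ) + 1 = d - (p : ℕ) := by omega
    rw [h4]
    exact prod_compl (d := d) hlam (k := d - (p : ℕ)) (by omega) (by omega)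
      (fun m => aVar (eA d lam (d - (p : ℕ))) - aVar m)
  -- split the diagonal product
  have hsplit : ∏ p : Fin d, N (p.rev) p
      = (∏ k ∈ Finset.Icc 1 d, ∏ m ∈ Finset.Icc (k+1) d,
          (aVar (eA d lam k) - aVar (eA d lam m)))
        * ∏ k ∈ Finset.Icc 1 d, ∏ j ∈ Finset.Icc 1 (lam k),
            (aVar (eA d lam k) - aVar (gA d lam j)) := by
    rw [prod_Icc_fin_rev hd (fun k => ∏ m ∈ Finset.Icc (k+1) d,
        (aVar (eA d lam k) - aVar (eA d lam m))),
      prod_Icc_fin_rev hd (fun k => ∏ j ∈ Finset.Icc 1 (lam k),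
        (aVar (eA d lam k) - aVar (gA d lam j))),
      ← Finset.prod_mul_distrib]
    exact Finset.prod_congr rfl fun p _ => hdiag p
  set A : RR := ∏ k ∈ Finset.Icc 1 d, ∏ m ∈ Finset.Icc (k+1) d,
      (aVar (eA d lam k) - aVar (eA d lam m)) with hA
  have hApairs : A = ∏ p ∈ pairsF d,
      (aVar (eA d lam ((p.1 : ℕ) + 1)) - aVar (eA d lam ((p.2 : ℕ) + 1))) :=
    prod_pairs_Icc hd (fun k m => aVar (eA d lam k) - aVar (eA d lam m))
  -- φ of the Vandermonde product
  have hxval : ∀ i : Fin d, φ (xVar ((i : ℕ) + 1)) = aVar (eA d lam (d - (i : ℕ))) := by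
    intro i
    have hi := i.isLt
    have h2 : d - ((i : ℕ) + 1) + 1 = d - (i : ℕ) := by omega
    have h3 : eA d lam (d - (i : ℕ)) = lam (d - (i : ℕ)) + ((i : ℕ) + 1) := by
      unfold eA; omega
    simp only [hφ, xVar, aVar, aeval_X, Sum.elim_inl, h2, h3]
  have hvand : φ (vandA d) = (-1 : RR) ^ c * A := by
    rw [vandA, map_prod]
    rw [show (Finset.univ.filter fun p : Fin d × Fin d => p.1 < p.2) = pairsF d from rfl]
    rw [Finset.prod_congr rfl (fun p (_ : p ∈ pairsF d) => by
      rw [map_sub, hxval p.1, hxval p.2] :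
      ∀ p ∈ pairsF d, φ (xVar ((p.1 : ℕ) + 1) - xVar ((p.2 : ℕ) + 1))
        = aVar (eA d lam (d - ((p.1 : Fin d) : ℕ))) - aVar (eA d lam (d - ((p.2 : Fin d) : ℕ))))]
    rw [prod_pairs_rev (fun p : Fin d × Fin d =>
      aVar (eA d lam (d - (p.1 : ℕ))) - aVar (eA d lam (d - (p.2 : ℕ))))]
    have hstep2 : ∀ p ∈ pairsF d,
        (aVar (eA d lam (d - ((p.2.rev : Fin d) : ℕ))) - aVar (eA d lam (d - ((p.1.rev : Fin d) : ℕ))))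
          = -(aVar (eA d lam ((p.1 : ℕ) + 1)) - aVar (eA d lam ((p.2 : ℕ) + 1))) := by
      intro p _
      have ha := p.1.isLt; have hb := p.2.isLt
      have hr1 : ((p.1.rev : Fin d) : ℕ) = d - ((p.1 : ℕ) + 1) := Fin.val_rev p.1
      have hr2 : ((p.2.rev : Fin d) : ℕ) = d - ((p.2 : ℕ) + 1) := Fin.val_rev p.2
      have h5 : d - ((p.1.rev : Fin d) : ℕ) = (p.1 : ℕ) + 1 := by omega
      have h6 : d - ((p.2.rev : Fin d) : ℕ) = (p.2 : ℕ) + 1 := by omega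
      rw [h5, h6]; ring
    rw [Finset.prod_congr rfl hstep2, prod_neg', hApairs, hc]
  -- nonvanishing of A
  have hAne : A ≠ 0 := by
    rw [hApairs, Finset.prod_ne_zero_iff]
    intro p hp
    simp only [pairsF, Finset.mem_filter, Finset.mem_univ, true_and] at hp
    apply sub_ne_zero_of_ne
    have h1 : ((p.1 : ℕ)) + 1 < ((p.2 : ℕ)) + 1 := by
      rw [Fin.lt_def] at hp; omega
    have h2 : eA d lam ((p.2 : ℕ) + 1) < eA d lam ((p.1 : ℕ) + 1) :=
      eA_lt hlam (by omega) h1 p.2.isLt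
    intro h
    have h3 := MvPolynomial.X_injective h
    have h4 : eA d lam ((p.1 : ℕ) + 1) = eA d lam ((p.2 : ℕ) + 1) := by
      simpa [aVar] using h3
    omega
  -- the right-hand side
  have hRHS : (∏ b ∈ YDA d lam, (aVar (w (d - b.1 + 1)) - aVar (w (d + b.2))))
      = ∏ k ∈ Finset.Icc 1 d, ∏ j ∈ Finset.Icc 1 (lam k),
          (aVar (eA d lam k) - aVar (gA d lam j)) := by
    rw [YDA, Finset.prod_biUnion]
    · refine Finset.prod_congr rfl fun k hk => ?_
      simp only [Finset.mem_Icc] at hk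
      rw [Finset.prod_image (fun a _ b _ hab => by simpa using congrArg Prod.snd hab)]
      refine Finset.prod_congr rfl fun j hj => ?_
      simp only [Finset.mem_Icc] at hj
      have hjnd : j ≤ n - d :=
        le_trans hj.2 (le_trans (lam_anti hlam le_rfl hk.1) hlam1)
      rw [hw1 (d - k + 1) (by omega) (by omega), hw2 j hj.1 hjnd]
      have h5 : d - (d - k + 1) + 1 = k := by omega
      rw [h5]
      have h6 : lam k + (d - k + 1) = eA d lam k := by unfold eA; omega
      rw [h6]
      rfl
    · intro i _ i' _ hne
      simp only [Function.onFun]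
      rw [Finset.disjoint_left]
      rintro x hx hx'
      simp only [Finset.mem_image, Finset.mem_Icc] at hx hx'
      obtain ⟨j, _, rfl⟩ := hx
      obtain ⟨j', _, hj'⟩ := hx'
      exact hne (congrArg Prod.fst hj').symm
  -- determinant bookkeeping
  have hdetN : φ (schurNumA d lam) = N.det := by
    rw [hN]
    exact AlgHom.map_det φ _
  have hmain : φ (vandA d) * φ S = N.det := by
    rw [← map_mul, hS, hdetN]
  have hsign := Matrix.det_permute (Fin.revPerm) N
  have hsr : ((Equiv.Perm.sign (Fin.revPerm : Equiv.Perm (Fin d)) : ℤ) : RR)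
      = (-1 : RR) ^ c := sign_rev_eq d
  -- assemble
  apply mul_left_cancel₀ hAne
  calc A * φ S = ((-1 : RR) ^ c * (-1 : RR) ^ c) * (A * φ S) := by rw [hc2, one_mul]
    _ = (-1 : RR) ^ c * (((-1 : RR) ^ c * A) * φ S) := by ring
    _ = (-1 : RR) ^ c * N.det := by rw [← hvand, hmain]
    _ = ((Equiv.Perm.sign (Fin.revPerm : Equiv.Perm (Fin d)) : ℤ) : RR) * N.det := by
        rw [hsr]
    _ = (N.submatrix (Fin.revPerm) id).det := by rw [hsign]
    _ = A * ∏ k ∈ Finset.Icc 1 d, ∏ j ∈ Finset.Icc 1 (lam k),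
          (aVar (eA d lam k) - aVar (gA d lam j)) := by rw [hdet1, hsplit]
    _ = A * ∏ b ∈ YDA d lam, (aVar (w (d - b.1 + 1)) - aVar (w (d + b.2))) := by rw [hRHS]
end

section
/- Let λ be a partition with at most d parts. Then (s_{(1)}^{(d)}(x|a) − s_{(1)}^{(d)}(a_λ|a)) · s_λ^{(d)}(x|a) = Σ_ν s_ν^{(d)}(x|a), where the sum runs over all partitions ν with at most d parts such that λ_i ≤ ν_i for all i and |ν| = |λ| + 1. -/
open MvPolynomial

/-- The factorial-Schur numerator for a partition encoded as `g : Fin d → ℕ`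
(`g p` is the part `ν_{p+1}`). -/
noncomputable def schurNumA' (d : ℕ) (g : Fin d → ℕ) : MvPolynomial (ℕ ⊕ ℕ) ℤ :=
  Matrix.det (Matrix.of fun p q : Fin d =>
    fallA (xVar ((q : ℕ) + 1)) (g p + d - ((p : ℕ) + 1)))

open scoped Classical in
/-- The partitions `ν` with at most `d` parts such that `λ ⊆ ν` and `|ν| = |λ| + 1`. -/
noncomputable def nuSetA (d : ℕ) (lam : ℕ → ℕ) : Finset (Fin d → ℕ) :=
  (Finset.Icc (fun p : Fin d => lam ((p : ℕ) + 1))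
      (fun p : Fin d => lam ((p : ℕ) + 1) + 1)).filter
    fun g => (∀ p q : Fin d, p ≤ q → g q ≤ g p) ∧
      (∀ p : Fin d, lam ((p : ℕ) + 1) ≤ g p) ∧
      (∑ p, g p) = (∑ j ∈ Finset.Icc 1 d, lam j) + 1

open scoped Classical

lemma fallA_succ (z : MvPolynomial (ℕ ⊕ ℕ) ℤ) (k : ℕ) :
    fallA z (k + 1) = fallA z k * (z - aVar (k + 1)) := by
  unfold fallA
  exact Finset.prod_Icc_succ_top (Nat.le_add_left 1 k) _

lemma xmul_fallA (z : MvPolynomial (ℕ ⊕ ℕ) ℤ) (k : ℕ) :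
    z * fallA z k = fallA z (k + 1) + aVar (k + 1) * fallA z k := by
  rw [fallA_succ]; ring

lemma vandA_ne_zero (d : ℕ) : vandA d ≠ 0 := by
  unfold vandA
  rw [Finset.prod_ne_zero_iff]
  intro p hp
  simp only [Finset.mem_filter, Finset.mem_univ, true_and] at hp
  intro h
  have h2 : (p.1 : ℕ) = (p.2 : ℕ) := by simpa [xVar] using sub_eq_zero.mp h
  exact absurd (Fin.ext h2) (ne_of_lt hp)

lemma sum_Icc_eq_sum_fin {M : Type*} [AddCommMonoid M] (d : ℕ) (f : ℕ → M) :
    ∑ j ∈ Finset.Icc 1 d, f j = ∑ r : Fin d, f ((r : ℕ) + 1) := by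
  rw [Fin.sum_univ_eq_sum_range (fun i => f (i + 1)) d]
  induction d with
  | zero => simp
  | succ n ih => rw [Finset.sum_Icc_succ_top (by omega), Finset.sum_range_succ, ih]

lemma sum_Icc_eq_sum_fin_rev {M : Type*} [AddCommMonoid M] (d : ℕ) (f : ℕ → M) :
    ∑ j ∈ Finset.Icc 1 d, f j = ∑ p : Fin d, f (d - (p : ℕ)) := by
  rw [sum_Icc_eq_sum_fin, Fin.sum_univ_eq_sum_range (fun i => f (i + 1)) d,
    Fin.sum_univ_eq_sum_range (fun i => f (d - i)) d,
    ← Finset.sum_range_reflect (fun i => f (i + 1)) d]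
  refine Finset.sum_congr rfl fun i hi => ?_
  simp only [Finset.mem_range] at hi
  congr 1
  omega

lemma lam_anti_s10 (lam : ℕ → ℕ) (hlam : ∀ i, 1 ≤ i → lam (i + 1) ≤ lam i) :
    ∀ i j, 1 ≤ i → i ≤ j → lam j ≤ lam i := by
  intro i j h1 hij
  induction j with
  | zero => omega
  | succ n ih =>
    rcases Nat.lt_or_ge i (n + 1) with h | h
    · exact le_trans (hlam n (by omega)) (ih (by omega))
    · have : i = n + 1 := by omega
      rw [this]

noncomputable def Mmat (d : ℕ) (lam : ℕ → ℕ) : Matrix (Fin d) (Fin d) (MvPolynomial (ℕ ⊕ ℕ) ℤ) :=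
  Matrix.of fun p q : Fin d =>
    fallA (xVar ((q : ℕ) + 1)) (lam ((p : ℕ) + 1) + d - ((p : ℕ) + 1))

def kk (d : ℕ) (lam : ℕ → ℕ) (p : Fin d) : ℕ := lam ((p : ℕ) + 1) + d - ((p : ℕ) + 1)

noncomputable def Mplus (d : ℕ) (lam : ℕ → ℕ) (p : Fin d) :
    Matrix (Fin d) (Fin d) (MvPolynomial (ℕ ⊕ ℕ) ℤ) :=
  (Mmat d lam).updateRow p (fun q => fallA (xVar ((q : ℕ) + 1)) (kk d lam p + 1))

lemma L_id1 (d : ℕ) (lam : ℕ → ℕ) :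
    ∑ p : Fin d, ((Mmat d lam).updateRow p fun q => xVar ((q : ℕ) + 1) * Mmat d lam p q).det
      = (∑ q : Fin d, xVar ((q : ℕ) + 1)) * (Mmat d lam).det := by
  set M := Mmat d lam with hM
  have entry : ∀ (p : Fin d) (σ : Equiv.Perm (Fin d)),
      (∏ i : Fin d, (M.updateRow p fun q => xVar ((q : ℕ) + 1) * M p q) (σ i) i)
        = xVar (((σ⁻¹ p : Fin d) : ℕ) + 1) * ∏ i : Fin d, M (σ i) i := by
    intro p σ
    have h1 : ∀ i : Fin d, (M.updateRow p fun q => xVar ((q : ℕ) + 1) * M p q) (σ i) i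
        = (if σ i = p then xVar ((i : ℕ) + 1) else 1) * M (σ i) i := by
      intro i
      by_cases h : σ i = p
      · rw [h, Matrix.updateRow_self, if_pos rfl]
      · rw [Matrix.updateRow_ne h, if_neg h, one_mul]
    rw [Finset.prod_congr rfl fun i _ => h1 i, Finset.prod_mul_distrib]
    congr 1
    rw [Finset.prod_eq_single (σ⁻¹ p)]
    · have hσ : σ (σ⁻¹ p) = p := Equiv.apply_symm_apply σ p
      rw [if_pos hσ]
    · intro i _ hi
      rw [if_neg]
      intro h
      exact hi (by rw [← h]; exact (Equiv.symm_apply_apply σ i).symm)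
    · intro h; exact absurd (Finset.mem_univ _) h
  calc ∑ p : Fin d, (M.updateRow p fun q => xVar ((q : ℕ) + 1) * M p q).det
      = ∑ p : Fin d, ∑ σ : Equiv.Perm (Fin d),
          Equiv.Perm.sign σ • (xVar (((σ⁻¹ p : Fin d) : ℕ) + 1) * ∏ i : Fin d, M (σ i) i) := by
        refine Finset.sum_congr rfl fun p _ => ?_
        rw [Matrix.det_apply]
        exact Finset.sum_congr rfl fun σ _ => by rw [entry p σ]
    _ = ∑ σ : Equiv.Perm (Fin d), ∑ p : Fin d,
          Equiv.Perm.sign σ • (xVar (((σ⁻¹ p : Fin d) : ℕ) + 1) * ∏ i : Fin d, M (σ i) i) :=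
        Finset.sum_comm
    _ = ∑ σ : Equiv.Perm (Fin d),
          Equiv.Perm.sign σ • ((∑ q : Fin d, xVar ((q : ℕ) + 1)) * ∏ i : Fin d, M (σ i) i) := by
        refine Finset.sum_congr rfl fun σ _ => ?_
        rw [← Finset.smul_sum, ← Finset.sum_mul]
        have := Equiv.sum_comp (σ⁻¹ : Equiv.Perm (Fin d)) (fun q : Fin d => xVar ((q : ℕ) + 1))
        rw [this]
    _ = (∑ q : Fin d, xVar ((q : ℕ) + 1)) * M.det := by
        rw [Matrix.det_apply, Finset.mul_sum]
        exact Finset.sum_congr rfl fun σ _ => (mul_smul_comm _ _ _).symm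

lemma L_id2 (d : ℕ) (lam : ℕ → ℕ) (p : Fin d) :
    ((Mmat d lam).updateRow p fun q => xVar ((q : ℕ) + 1) * Mmat d lam p q).det
      = (Mplus d lam p).det + aVar (kk d lam p + 1) * (Mmat d lam).det := by
  have hrow : (fun q : Fin d => xVar ((q : ℕ) + 1) * Mmat d lam p q)
      = (fun q : Fin d => fallA (xVar ((q : ℕ) + 1)) (kk d lam p + 1))
        + (aVar (kk d lam p + 1)) • (Mmat d lam p) := by
    funext q
    simp only [Pi.add_apply, Pi.smul_apply, smul_eq_mul]
    exact xmul_fallA _ _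
  rw [hrow, Matrix.det_updateRow_add, Matrix.det_updateRow_smul, Matrix.updateRow_eq_self]
  rfl

lemma L_comb (d : ℕ) (lam : ℕ → ℕ) :
    ((∑ q : Fin d, xVar ((q : ℕ) + 1)) - ∑ p : Fin d, aVar (kk d lam p + 1))
        * (Mmat d lam).det = ∑ p : Fin d, (Mplus d lam p).det := by
  have h2 : ∑ p : Fin d, ((Mmat d lam).updateRow p fun q => xVar ((q : ℕ) + 1) * Mmat d lam p q).det
      = ∑ p : Fin d, (Mplus d lam p).det
        + (∑ p : Fin d, aVar (kk d lam p + 1)) * (Mmat d lam).det := by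
    rw [Finset.sum_congr rfl fun p _ => L_id2 d lam p, Finset.sum_add_distrib, Finset.sum_mul]
  have h1 := L_id1 d lam
  rw [h2] at h1
  rw [sub_mul]
  linear_combination -h1

def validP (d : ℕ) (lam : ℕ → ℕ) (p : Fin d) : Prop :=
  (p : ℕ) = 0 ∨ lam ((p : ℕ) + 1) + 1 ≤ lam (p : ℕ)

lemma det_Mplus_zero (d : ℕ) (lam : ℕ → ℕ) (hlam : ∀ i, 1 ≤ i → lam (i + 1) ≤ lam i)
    (p : Fin d) (hp : ¬ validP d lam p) : (Mplus d lam p).det = 0 := by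
  unfold validP at hp
  push_neg at hp
  obtain ⟨hp0, hplt⟩ := hp
  have heq : lam ((p : ℕ) + 1) = lam (p : ℕ) := by
    have := hlam (p : ℕ) (by omega)
    omega
  have hpd := p.2
  set p' : Fin d := ⟨(p : ℕ) - 1, by omega⟩ with hp'
  have hne : p' ≠ p := by
    intro h
    have := congrArg Fin.val h
    simp only [hp'] at this
    omega
  apply Matrix.det_zero_of_row_eq hne
  funext q
  simp only [Mplus, Matrix.updateRow_apply, if_neg hne, if_pos rfl]
  show fallA (xVar ((q : ℕ) + 1)) (lam (((p' : Fin d) : ℕ) + 1) + d - (((p' : Fin d) : ℕ) + 1)) = _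
  congr 1
  show lam ((p : ℕ) - 1 + 1) + d - ((p : ℕ) - 1 + 1) = kk d lam p + 1
  have h2 : (p : ℕ) - 1 + 1 = (p : ℕ) := by omega
  rw [h2]
  simp only [kk]
  rw [heq]
  omega

noncomputable def gfun (d : ℕ) (lam : ℕ → ℕ) (p : Fin d) : Fin d → ℕ :=
  fun r => lam ((r : ℕ) + 1) + if r = p then 1 else 0

lemma schurNumA'_gfun (d : ℕ) (lam : ℕ → ℕ) (p : Fin d) :
    schurNumA' d (gfun d lam p) = (Mplus d lam p).det := by
  unfold schurNumA' Mplus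
  congr 1
  funext r q
  rw [Matrix.updateRow_apply]
  by_cases h : r = p
  · rw [if_pos h, h]
    show fallA (xVar ((q : ℕ) + 1)) (gfun d lam p p + d - ((p : ℕ) + 1)) = _
    congr 1
    simp only [gfun, eq_self_iff_true, if_true, kk]
    have := p.2
    omega
  · rw [if_neg h]
    show fallA (xVar ((q : ℕ) + 1)) (gfun d lam p r + d - ((r : ℕ) + 1)) = _
    simp only [gfun, if_neg h, add_zero]
    rfl

lemma gfun_mem (d : ℕ) (lam : ℕ → ℕ) (hlam : ∀ i, 1 ≤ i → lam (i + 1) ≤ lam i)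
    (p : Fin d) (hp : validP d lam p) : gfun d lam p ∈ nuSetA d lam := by
  unfold nuSetA
  rw [Finset.mem_filter, Finset.mem_Icc]
  refine ⟨⟨Pi.le_def.mpr fun r => ?_, Pi.le_def.mpr fun r => ?_⟩, fun r s hrs => ?_,
    fun r => ?_, ?_⟩
  · simp [gfun]
  · simp only [gfun]; split <;> omega
  · by_cases hsp : s = p
    · subst hsp
      by_cases hrp : r = s
      · subst hrp; exact le_rfl
      · have hrlt : (r : ℕ) < (s : ℕ) :=
          lt_of_le_of_ne (Fin.le_def.mp hrs) (fun h => hrp (Fin.ext h))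
        simp only [gfun, eq_self_iff_true, if_true, if_neg hrp]
        rcases hp with h0 | hle
        · omega
        · have := lam_anti_s10 lam hlam ((r : ℕ) + 1) (s : ℕ) (by omega) (by omega)
          omega
    · simp only [gfun, if_neg hsp]
      have := lam_anti_s10 lam hlam ((r : ℕ) + 1) ((s : ℕ) + 1) (by omega)
        (by have := Fin.le_def.mp hrs; omega)
      split <;> omega
  · simp [gfun]
  · simp only [gfun]
    rw [Finset.sum_add_distrib, sum_Icc_eq_sum_fin d lam]
    simp

lemma key (d : ℕ) (lam : ℕ → ℕ) (hlam : ∀ i, 1 ≤ i → lam (i + 1) ≤ lam i) :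
    ((∑ q : Fin d, xVar ((q : ℕ) + 1)) - ∑ p : Fin d, aVar (lam ((p : ℕ) + 1) + d - (p : ℕ)))
        * schurNumA d lam = ∑ g ∈ nuSetA d lam, schurNumA' d g := by
  have hdet : schurNumA d lam = (Mmat d lam).det := rfl
  have hk1 : ∀ p : Fin d, aVar (lam ((p : ℕ) + 1) + d - (p : ℕ)) = aVar (kk d lam p + 1) := by
    intro p
    have := p.2
    congr 1
    simp only [kk]
    omega
  rw [hdet, Finset.sum_congr rfl fun p _ => hk1 p, L_comb d lam]
  rw [← Finset.sum_filter_add_sum_filter_not Finset.univ (validP d lam)]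
  have hz : ∑ p ∈ Finset.univ.filter (fun p => ¬ validP d lam p), (Mplus d lam p).det = 0 :=
    Finset.sum_eq_zero fun p hp => det_Mplus_zero d lam hlam p (Finset.mem_filter.mp hp).2
  rw [hz, add_zero]
  refine Finset.sum_bij (fun p _ => gfun d lam p) ?_ ?_ ?_ ?_
  · intro p hp
    exact gfun_mem d lam hlam p (Finset.mem_filter.mp hp).2
  · intro p1 h1 p2 h2 heq
    by_contra hne
    have := congrFun heq p1
    simp only [gfun, eq_self_iff_true, if_true, if_neg hne] at this
    omega
  · intro g hg
    simp only [nuSetA, Finset.mem_filter, Finset.mem_Icc] at hg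
    obtain ⟨⟨hlo, hhi⟩, hanti, hlo', hsum⟩ := hg
    have hhi2 : ∀ r : Fin d, g r ≤ lam ((r : ℕ) + 1) + 1 := fun r => Pi.le_def.mp hhi r
    have hsum' : ∑ r : Fin d, g r = (∑ r : Fin d, lam ((r : ℕ) + 1)) + 1 := by
      rw [hsum, sum_Icc_eq_sum_fin d lam]
    have hex : ∃ p : Fin d, g p = lam ((p : ℕ) + 1) + 1 := by
      by_contra hno
      push_neg at hno
      have hall : ∀ r : Fin d, g r = lam ((r : ℕ) + 1) := by
        intro r
        have h1 := hhi2 r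
        have h2 := hlo' r
        have h3 := hno r
        omega
      rw [Finset.sum_congr rfl fun r _ => hall r] at hsum'
      omega
    obtain ⟨p, hp⟩ := hex
    have hsumh : ∑ r : Fin d, (g r - lam ((r : ℕ) + 1)) = 1 := by
      have hgr : ∀ r : Fin d, g r = lam ((r : ℕ) + 1) + (g r - lam ((r : ℕ) + 1)) := by
        intro r; have := hlo' r; omega
      rw [Finset.sum_congr rfl fun r _ => hgr r, Finset.sum_add_distrib] at hsum'
      omega
    have herase : ∀ r : Fin d, r ≠ p → g r = lam ((r : ℕ) + 1) := by
      intro r hr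
      have hsplit : (g p - lam ((p : ℕ) + 1))
          + ∑ r ∈ Finset.univ.erase p, (g r - lam ((r : ℕ) + 1))
          = ∑ r : Fin d, (g r - lam ((r : ℕ) + 1)) :=
        Finset.add_sum_erase Finset.univ
          (fun r : Fin d => g r - lam ((r : ℕ) + 1)) (Finset.mem_univ p)
      have hfp : g p - lam ((p : ℕ) + 1) = 1 := by omega
      have h0 : ∑ r ∈ Finset.univ.erase p, (g r - lam ((r : ℕ) + 1)) = 0 := by omega
      have hzr := Finset.sum_eq_zero_iff.mp h0 r (Finset.mem_erase.mpr ⟨hr, Finset.mem_univ r⟩)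
      have := hlo' r
      omega
    refine ⟨p, ?_, ?_⟩
    · rw [Finset.mem_filter]
      refine ⟨Finset.mem_univ p, ?_⟩
      by_cases h0 : (p : ℕ) = 0
      · exact Or.inl h0
      · refine Or.inr ?_
        have hpd := p.2
        set p' : Fin d := ⟨(p : ℕ) - 1, by omega⟩ with hp'
        have hle : p' ≤ p := by
          rw [Fin.le_def]
          show (p : ℕ) - 1 ≤ (p : ℕ)
          omega
        have hgle := hanti p' p hle
        have hne' : p' ≠ p := by
          intro h
          have := congrArg Fin.val h
          simp only [hp'] at this
          omega
        have hgp' : g p' = lam (((p' : Fin d) : ℕ) + 1) := herase p' hne'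
        have hcoe : ((p' : Fin d) : ℕ) + 1 = (p : ℕ) := by
          show (p : ℕ) - 1 + 1 = (p : ℕ)
          omega
        rw [hcoe] at hgp'
        omega
    · funext r
      by_cases hr : r = p
      · subst hr
        simp only [gfun, eq_self_iff_true, if_true]
        omega
      · simp only [gfun, if_neg hr, add_zero]
        exact (herase r hr).symm
  · intro p hp
    exact (schurNumA'_gfun d lam p).symm

/-- Pieri rule for factorial Schur functions.
`(s_{(1)}^{(d)}(x|a) - s_{(1)}^{(d)}(a_λ|a)) ⋅ s_λ^{(d)}(x|a) = ∑_ν s_ν^{(d)}(x|a)`,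
summed over partitions `ν ⊇ λ` with at most `d` parts and `|ν| = |λ| + 1`.
Here `s_{(1)}^{(d)}(x|a) = x_1 + ⋯ + x_d - a_1 - ⋯ - a_d`, so
`s_{(1)}^{(d)}(a_λ|a) = ∑_j a_{λ_{d-j+1}+j} - ∑_i a_i`; the higher factorial Schur
polynomials are encoded as the unique polynomials `S`, `F ν` with
`vandA d * S = schurNumA d λ` and `vandA d * F ν = schurNumA' d ν`. -/
theorem stmt10 (d : ℕ) (hd : 1 ≤ d) (lam : ℕ → ℕ)
    (hlam : ∀ i, 1 ≤ i → lam (i + 1) ≤ lam i) (hlam0 : ∀ i, d < i → lam i = 0)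
    (S : MvPolynomial (ℕ ⊕ ℕ) ℤ) (hS : vandA d * S = schurNumA d lam)
    (F : (Fin d → ℕ) → MvPolynomial (ℕ ⊕ ℕ) ℤ)
    (hF : ∀ g ∈ nuSetA d lam, vandA d * F g = schurNumA' d g) :
    (((∑ i ∈ Finset.Icc 1 d, xVar i) - ∑ i ∈ Finset.Icc 1 d, aVar i) -
        ((∑ j ∈ Finset.Icc 1 d, aVar (lam (d - j + 1) + j)) -
          ∑ i ∈ Finset.Icc 1 d, aVar i)) * S =
      ∑ g ∈ nuSetA d lam, F g := by
  have hv := vandA_ne_zero d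
  apply mul_left_cancel₀ hv
  have hE : (((∑ i ∈ Finset.Icc 1 d, xVar i) - ∑ i ∈ Finset.Icc 1 d, aVar i) -
        ((∑ j ∈ Finset.Icc 1 d, aVar (lam (d - j + 1) + j)) - ∑ i ∈ Finset.Icc 1 d, aVar i))
      = (∑ q : Fin d, xVar ((q : ℕ) + 1))
        - ∑ p : Fin d, aVar (lam ((p : ℕ) + 1) + d - (p : ℕ)) := by
    rw [sum_Icc_eq_sum_fin d xVar,
      sum_Icc_eq_sum_fin_rev d (fun j => aVar (lam (d - j + 1) + j))]
    have hterm : ∀ p : Fin d, aVar (lam (d - (d - (p : ℕ)) + 1) + (d - (p : ℕ)))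
        = aVar (lam ((p : ℕ) + 1) + d - (p : ℕ)) := by
      intro p
      have := p.2
      have h1 : d - (d - (p : ℕ)) + 1 = (p : ℕ) + 1 := by omega
      rw [h1]
      congr 1
      omega
    rw [Finset.sum_congr rfl fun p _ => hterm p]
    ring
  rw [hE]
  calc vandA d * (((∑ q : Fin d, xVar ((q : ℕ) + 1))
          - ∑ p : Fin d, aVar (lam ((p : ℕ) + 1) + d - (p : ℕ))) * S)
      = ((∑ q : Fin d, xVar ((q : ℕ) + 1))
          - ∑ p : Fin d, aVar (lam ((p : ℕ) + 1) + d - (p : ℕ))) * (vandA d * S) := by ring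
    _ = ((∑ q : Fin d, xVar ((q : ℕ) + 1))
          - ∑ p : Fin d, aVar (lam ((p : ℕ) + 1) + d - (p : ℕ))) * schurNumA d lam := by
        rw [hS]
    _ = ∑ g ∈ nuSetA d lam, schurNumA' d g := key d lam hlam
    _ = ∑ g ∈ nuSetA d lam, (vandA d * F g) :=
        Finset.sum_congr rfl fun g hg => (hF g hg).symm
    _ = vandA d * ∑ g ∈ nuSetA d lam, F g := (Finset.mul_sum _ _ _).symm
end

section
/- Let λ and μ be strict partitions, each with at most n parts. Then P_λ^{(n)}(a_μ | a) = 0 (as a polynomial in the parameters a_i) unless λ_i ≤ μ_i for all i. -/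
open MvPolynomial

/-- In `ℤ[x_1, x_2, …; a_1, a_2, …]`: the variable `x_i`. -/
noncomputable def xP (i : ℕ) : MvPolynomial (ℕ ⊕ ℕ) ℤ := X (Sum.inl i)

/-- In `ℤ[x_1, x_2, …; a_1, a_2, …]`: the parameter `a_m`. -/
noncomputable def aP (m : ℕ) : MvPolynomial (ℕ ⊕ ℕ) ℤ := X (Sum.inr m)

/-- `(z|a)^k = (z - a_1)(z - a_2) ⋯ (z - a_k)`. -/
noncomputable def fallP (z : MvPolynomial (ℕ ⊕ ℕ) ℤ) (k : ℕ) : MvPolynomial (ℕ ⊕ ℕ) ℤ :=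
  ∏ m ∈ Finset.Icc 1 k, (z - aP m)

/-- The permutation of the (1-based) indices `{1,…,n}` induced by `w ∈ S_n`. -/
def permNat (n : ℕ) (w : Equiv.Perm (Fin n)) : ℕ → ℕ := fun i =>
  if h : 1 ≤ i ∧ i ≤ n then ((w ⟨i - 1, by omega⟩ : Fin n) : ℕ) + 1 else i

/-- `G = (x_1|a)^{λ_1} ⋯ (x_r|a)^{λ_r} ⋅ ∏_{1≤i≤r, i<j≤n} (x_i+x_j)
⋅ ∏_{r<i<j≤n} (x_i-x_j)`, the product of the summand of `P_λ^{(n)}(x|a)` with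
`∏_{1≤i<j≤n}(x_i-x_j)`. -/
noncomputable def gP (n r : ℕ) (l : ℕ → ℕ) : MvPolynomial (ℕ ⊕ ℕ) ℤ :=
  (∏ k ∈ Finset.Icc 1 r, fallP (xP k) (l k)) *
  (∏ p ∈ Finset.univ.filter
      (fun p : Fin n × Fin n => p.1 < p.2 ∧ (p.1 : ℕ) + 1 ≤ r),
    (xP ((p.1 : ℕ) + 1) + xP ((p.2 : ℕ) + 1))) *
  (∏ p ∈ Finset.univ.filter
      (fun p : Fin n × Fin n => p.1 < p.2 ∧ r < (p.1 : ℕ) + 1),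
    (xP ((p.1 : ℕ) + 1) - xP ((p.2 : ℕ) + 1)))

/-- The Vandermonde product `Δ_n = ∏_{1 ≤ i < j ≤ n} (x_i - x_j)`. -/
noncomputable def deltaP (n : ℕ) : MvPolynomial (ℕ ⊕ ℕ) ℤ :=
  ∏ p ∈ Finset.univ.filter (fun p : Fin n × Fin n => p.1 < p.2),
    (xP ((p.1 : ℕ) + 1) - xP ((p.2 : ℕ) + 1))

/-- `numP n r λ = ∑_{w ∈ S_n} sgn(w) ⋅ w(G)`. -/
noncomputable def numP (n r : ℕ) (l : ℕ → ℕ) : MvPolynomial (ℕ ⊕ ℕ) ℤ :=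
  ∑ w : Equiv.Perm (Fin n),
    ((Equiv.Perm.sign w : ℤ) : MvPolynomial (ℕ ⊕ ℕ) ℤ) *
      MvPolynomial.rename (Sum.map (permNat n w) id) (gP n r l)

/-- `IsP n r l P` says that `P` is Ivanov's factorial P-function
`P_λ^{(n)}(x|a)` for the strict partition `l` with `r` parts: clearing the
denominators in the defining formula
`P_λ^{(n)}(x|a) = (1/(n-r)!) ∑_{w∈S_n} w((x_1|a)^{λ_1} ⋯ (x_r|a)^{λ_r}
∏_{1≤i≤r,i<j≤n} (x_i+x_j)/(x_i-x_j))`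
gives the equivalent polynomial identity `(n-r)! ⋅ Δ_n ⋅ P = ∑_w sgn(w) w(G)`,
which determines `P` uniquely. -/
def IsP (n r : ℕ) (l : ℕ → ℕ) (P : MvPolynomial (ℕ ⊕ ℕ) ℤ) : Prop :=
  ((n - r).factorial : MvPolynomial (ℕ ⊕ ℕ) ℤ) * (deltaP n * P) = numP n r l

/-- `l` is a strict partition with exactly `r` (positive) parts `l 1 > ⋯ > l r`. -/
def IsStrict (r : ℕ) (l : ℕ → ℕ) : Prop :=
  (∀ i, 1 ≤ i → i < r → l (i + 1) < l i) ∧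
  (∀ i, 1 ≤ i → i ≤ r → 0 < l i) ∧
  (∀ i, r < i → l i = 0)

/-- The `j`-th entry (1-based, `1 ≤ j ≤ n`) of the `n`-tuple `a_μ` attached to a
strict partition `μ` with `s` parts:
`a_μ = (a_{μ_1+1},…,a_{μ_s+1},0,…,0)` if `n - s` is even, and
`a_μ = (a_{μ_1+1},…,a_{μ_s+1},a_1,0,…,0)` if `n - s` is odd. -/
noncomputable def aTupleP (n s : ℕ) (mu : ℕ → ℕ) : ℕ → MvPolynomial (ℕ ⊕ ℕ) ℤ :=
  fun j =>
    if 1 ≤ j ∧ j ≤ s then aP (mu j + 1)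
    else if j = s + 1 ∧ ¬ Even (n - s) then aP 1
    else 0

-- === aux ===

lemma isStrict_lt {r : ℕ} {l : ℕ → ℕ} (h : IsStrict r l) {a b : ℕ}
    (h1 : 1 ≤ a) (h2 : a < b) (h3 : b ≤ r) : l b < l a := by
  induction b with
  | zero => omega
  | succ b ih =>
    rcases Nat.lt_or_ge a b with hb | hb
    · exact lt_trans (h.1 b (by omega) (by omega)) (ih hb (by omega))
    · have hab : a = b := by omega
      subst hab
      exact h.1 a h1 (by omega)

lemma isStrict_le {r : ℕ} {l : ℕ → ℕ} (h : IsStrict r l) {a b : ℕ}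
    (h1 : 1 ≤ a) (h2 : a ≤ b) (h3 : b ≤ r) : l b ≤ l a := by
  rcases eq_or_lt_of_le h2 with he | hlt
  · subst he; exact le_rfl
  · exact le_of_lt (isStrict_lt h h1 hlt h3)

lemma permNat_bound (n : ℕ) (w : Equiv.Perm (Fin n)) {k : ℕ}
    (h1 : 1 ≤ k) (h2 : k ≤ n) : 1 ≤ permNat n w k ∧ permNat n w k ≤ n := by
  unfold permNat
  rw [dif_pos ⟨h1, h2⟩]
  have := (w ⟨k - 1, by omega⟩).isLt
  omega

lemma permNat_eq (n : ℕ) (w : Equiv.Perm (Fin n)) {k : ℕ}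
    (h1 : 1 ≤ k) (h2 : k ≤ n) :
    permNat n w k = ((w ⟨k - 1, by omega⟩ : Fin n) : ℕ) + 1 := by
  unfold permNat; rw [dif_pos ⟨h1, h2⟩]

lemma permNat_inv (n : ℕ) (w : Equiv.Perm (Fin n)) {k : ℕ}
    (h1 : 1 ≤ k) (h2 : k ≤ n) : permNat n w⁻¹ (permNat n w k) = k := by
  rw [permNat_eq n w h1 h2]
  have hlt := (w ⟨k - 1, by omega⟩).isLt
  rw [permNat_eq n w⁻¹ (by omega) (by omega)]
  have he : (⟨(w ⟨k - 1, by omega⟩ : Fin n).val + 1 - 1, by omega⟩ : Fin n)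
      = w ⟨k - 1, by omega⟩ := Fin.ext (by simp)
  rw [he, ← Equiv.Perm.mul_apply, inv_mul_cancel, Equiv.Perm.one_apply]
  simp
  omega

-- === part 2 ===

def qq (n s : ℕ) : ℕ := if Even (n - s) then s else s + 1

lemma qq_ge (n s : ℕ) : s ≤ qq n s := by unfold qq; split <;> omega

lemma qq_le (n s : ℕ) (h : s ≤ n) : qq n s ≤ n := by
  unfold qq; split
  · omega
  · rename_i hE
    have : n - s ≠ 0 := by intro h0; exact hE (by rw [h0]; exact Even.zero)
    omega

lemma qq_odd {n s : ℕ} (h : ¬ Even (n - s)) : qq n s = s + 1 := by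
  unfold qq; rw [if_neg h]

lemma qq_even {n s : ℕ} (h : Even (n - s)) : qq n s = s := by
  unfold qq; rw [if_pos h]

lemma qq_parity (n s : ℕ) (h : s ≤ n) : (n - qq n s) % 2 = 0 := by
  rcases Nat.even_or_odd (n - s) with hE | hO
  · rw [qq_even hE]; exact Nat.even_iff.mp hE
  · rw [qq_odd (Nat.not_even_iff_odd.mpr hO)]
    have h1 := Nat.odd_iff.mp hO
    omega

noncomputable def vS (n s : ℕ) (mu : ℕ → ℕ) : ℕ → MvPolynomial (ℕ ⊕ ℕ) ℤ := fun j =>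
  if 1 ≤ j ∧ j ≤ s then aP (mu j + 1)
  else if j = s + 1 ∧ ¬ Even (n - s) then aP 1
  else if qq n s < j ∧ j ≤ n then (if (j - qq n s) % 2 = 1 then xP j else -(xP (j-1)))
  else xP j

lemma vS_a (n s : ℕ) (mu : ℕ → ℕ) {j : ℕ} (h1 : 1 ≤ j) (h2 : j ≤ s) :
    vS n s mu j = aP (mu j + 1) := by
  unfold vS; rw [if_pos ⟨h1, h2⟩]

lemma vS_a1 (n s : ℕ) (mu : ℕ → ℕ) (h : ¬ Even (n - s)) :
    vS n s mu (s + 1) = aP 1 := by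
  unfold vS; rw [if_neg (by omega), if_pos ⟨rfl, h⟩]

lemma vS_fresh_odd (n s : ℕ) (mu : ℕ → ℕ) {j : ℕ} (hq : qq n s < j) (hn : j ≤ n)
    (hd : (j - qq n s) % 2 = 1) : vS n s mu j = xP j := by
  have hs := qq_ge n s
  unfold vS
  rw [if_neg (by omega), if_neg ?_, if_pos ⟨hq, hn⟩, if_pos hd]
  rintro ⟨he, hE⟩
  rw [qq_odd hE] at hq; omega

lemma vS_fresh_even (n s : ℕ) (mu : ℕ → ℕ) {j : ℕ} (hq : qq n s < j) (hn : j ≤ n)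
    (hd : (j - qq n s) % 2 = 0) : vS n s mu j = -(xP (j-1)) := by
  have hs := qq_ge n s
  unfold vS
  rw [if_neg (by omega), if_neg ?_, if_pos ⟨hq, hn⟩, if_neg (by omega)]
  rintro ⟨he, hE⟩
  rw [qq_odd hE] at hq; omega

lemma slot_cases {n s : ℕ} (hsn : s ≤ n) {k : ℕ} (h1 : 1 ≤ k) (h2 : k ≤ n) :
    (1 ≤ k ∧ k ≤ s) ∨ (k = s + 1 ∧ ¬ Even (n - s)) ∨ (qq n s < k ∧ k ≤ n) := by
  by_cases hE : Even (n - s)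
  · rw [qq_even hE]; omega
  · rw [qq_odd hE]
    rcases Nat.lt_or_ge k (s+1) with h | h
    · left; omega
    · rcases Nat.eq_or_lt_of_le h with h' | h'
      · right; left; exact ⟨h'.symm, hE⟩
      · right; right; omega

lemma pair_exists (n s : ℕ) (mu : ℕ → ℕ) (hsn : s ≤ n) {j : ℕ}
    (hq : qq n s < j) (hn : j ≤ n) :
    ∃ j', qq n s < j' ∧ j' ≤ n ∧ j' ≠ j ∧ vS n s mu j + vS n s mu j' = 0 := by
  have hpar := qq_parity n s hsn
  rcases Nat.mod_two_eq_zero_or_one (j - qq n s) with hd | hd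
  · -- j is the second of a pair, partner j - 1
    refine ⟨j - 1, by omega, by omega, by omega, ?_⟩
    rw [vS_fresh_even n s mu hq hn hd, vS_fresh_odd n s mu (by omega) (by omega) (by omega)]
    ring
  · -- partner j + 1
    have hjn : j < n := by omega
    refine ⟨j + 1, by omega, by omega, by omega, ?_⟩
    rw [vS_fresh_odd n s mu hq hn hd, vS_fresh_even n s mu (by omega) (by omega) (by omega)]
    simp

lemma one_ne_negone : ∀ {b₁ b₂ : MvPolynomial (ℕ ⊕ ℕ) ℤ},
    (∃ t, b₁ = X t) → (∃ t, b₂ = -(X t)) → b₁ ≠ b₂ := by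
  rintro b₁ b₂ ⟨t1, rfl⟩ ⟨t2, rfl⟩ hEq
  have := congrArg (eval (fun _ => (1:ℤ))) hEq
  simp at this

lemma vS_ne {n s : ℕ} (mu : ℕ → ℕ) (hsn : s ≤ n) (hmu : IsStrict s mu) {i j : ℕ}
    (h1 : 1 ≤ i) (hij : i < j) (hjn : j ≤ n) :
    vS n s mu i ≠ vS n s mu j := by
  have hXinj : Function.Injective (X : (ℕ ⊕ ℕ) → MvPolynomial (ℕ ⊕ ℕ) ℤ) :=
    MvPolynomial.X_injective
  have hqs := qq_ge n s
  rcases slot_cases hsn h1 (by omega) with hi | hi | hi <;>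
    rcases slot_cases hsn (by omega) hjn with hj | hj | hj
  · -- a a
    rw [vS_a n s mu hi.1 hi.2, vS_a n s mu hj.1 hj.2]
    intro hEq
    have := Sum.inr.inj (hXinj hEq)
    have := isStrict_lt hmu h1 hij hj.2
    omega
  · -- a a1
    rw [vS_a n s mu hi.1 hi.2, hj.1, vS_a1 n s mu hj.2]
    intro hEq
    have := Sum.inr.inj (hXinj hEq)
    have := hmu.2.1 i h1 hi.2
    omega
  · -- a fresh
    rw [vS_a n s mu hi.1 hi.2]
    rcases Nat.mod_two_eq_zero_or_one (j - qq n s) with hd | hd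
    · rw [vS_fresh_even n s mu hj.1 hj.2 hd]
      exact one_ne_negone ⟨_, rfl⟩ ⟨_, rfl⟩
    · rw [vS_fresh_odd n s mu hj.1 hj.2 hd]
      intro hEq; exact absurd (hXinj hEq) (by simp)
  · -- a1 a : impossible
    omega
  · -- a1 a1 : i = j impossible
    omega
  · -- a1 fresh
    rw [hi.1, vS_a1 n s mu hi.2]
    rcases Nat.mod_two_eq_zero_or_one (j - qq n s) with hd | hd
    · rw [vS_fresh_even n s mu hj.1 hj.2 hd]
      exact one_ne_negone ⟨_, rfl⟩ ⟨_, rfl⟩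
    · rw [vS_fresh_odd n s mu hj.1 hj.2 hd]
      intro hEq; exact absurd (hXinj hEq) (by simp)
  · -- fresh a : impossible
    omega
  · -- fresh a1 : impossible
    rw [qq_odd hj.2] at hi
    omega
  · -- fresh fresh
    rcases Nat.mod_two_eq_zero_or_one (i - qq n s) with hdi | hdi <;>
      rcases Nat.mod_two_eq_zero_or_one (j - qq n s) with hdj | hdj
    · rw [vS_fresh_even n s mu hi.1 hi.2 hdi, vS_fresh_even n s mu hj.1 hj.2 hdj]
      intro hEq
      have := Sum.inl.inj (hXinj (neg_injective hEq))
      omega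
    · rw [vS_fresh_even n s mu hi.1 hi.2 hdi, vS_fresh_odd n s mu hj.1 hj.2 hdj]
      exact (one_ne_negone ⟨_, rfl⟩ ⟨_, rfl⟩).symm
    · rw [vS_fresh_odd n s mu hi.1 hi.2 hdi, vS_fresh_even n s mu hj.1 hj.2 hdj]
      exact one_ne_negone ⟨_, rfl⟩ ⟨_, rfl⟩
    · rw [vS_fresh_odd n s mu hi.1 hi.2 hdi, vS_fresh_odd n s mu hj.1 hj.2 hdj]
      intro hEq
      have := Sum.inl.inj (hXinj hEq)
      omega

lemma gP_zero (n r s : ℕ) (hrn : r ≤ n) (hsn : s ≤ n) (lam mu : ℕ → ℕ)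
    (hlam : IsStrict r lam) (hmu : IsStrict s mu)
    (h : ¬ ∀ i, 1 ≤ i → lam i ≤ mu i)
    (σ : ℕ → ℕ)
    (hmem : ∀ k, 1 ≤ k → k ≤ n → 1 ≤ σ k ∧ σ k ≤ n)
    (hinj : ∀ k k', 1 ≤ k → k ≤ n → 1 ≤ k' → k' ≤ n → σ k = σ k' → k = k')
    (hsurj : ∀ j, 1 ≤ j → j ≤ n → ∃ k, 1 ≤ k ∧ k ≤ n ∧ σ k = j) :
    aeval (Sum.elim (fun k => vS n s mu (σ k)) aP) (gP n r lam) = 0 := by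
  classical
  push_neg at h
  obtain ⟨i, hi1, hii⟩ := h
  have hii' : mu i < lam i := by omega
  have hir : i ≤ r := by
    by_contra hc
    have := hlam.2.2 i (by omega)
    omega
  set τ : (ℕ ⊕ ℕ) → MvPolynomial (ℕ ⊕ ℕ) ℤ :=
    Sum.elim (fun k => vS n s mu (σ k)) aP with hτ
  by_cases hall : ∀ k ∈ Finset.Icc 1 i,
      σ k ∈ (Finset.Icc 1 s).filter (fun j => lam i ≤ mu j)
  · exfalso
    have hsub : (Finset.Icc 1 s).filter (fun j => lam i ≤ mu j)
        ⊆ Finset.Icc 1 (i-1) := by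
      intro j hj
      simp only [Finset.mem_filter, Finset.mem_Icc] at hj ⊢
      refine ⟨hj.1.1, ?_⟩
      by_contra hc
      have : mu j ≤ mu i := isStrict_le hmu hi1 (by omega) hj.1.2
      omega
    have hcard := Finset.card_le_card_of_injOn σ
      (fun k hk => hsub (hall k hk)) ?injOn
    · rw [Nat.card_Icc, Nat.card_Icc] at hcard; omega
    case injOn =>
      intro a ha b hb hab
      simp only [Finset.coe_Icc, Set.mem_Icc] at ha hb
      exact hinj a b ha.1 (by omega) hb.1 (by omega) hab
  · push_neg at hall
    obtain ⟨k, hkmem, hkG⟩ := hall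
    rw [Finset.mem_Icc] at hkmem
    have hk1 := hkmem.1
    have hki := hkmem.2
    have hkr : k ≤ r := le_trans hki hir
    have hkn : k ≤ n := le_trans hkr hrn
    obtain ⟨hj1, hjn⟩ := hmem k hk1 hkn
    have hlk : lam i ≤ lam k := isStrict_le hlam hk1 hki hir
    have hlk1 : 1 ≤ lam k := by omega
    have e1 : ∀ m : ℕ, aeval τ (xP m) = vS n s mu (σ m) := by
      intro m; simp [xP, hτ]
    have e2 : ∀ m : ℕ, aeval τ (aP m) = aP m := by
      intro m; simp [aP, hτ]
    unfold gP
    rw [map_mul, map_mul]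
    rcases slot_cases hsn hj1 hjn with hj | hj | hj
    · -- σ k is an a-slot, factorial factor vanishes
      have hmuj : ¬ lam i ≤ mu (σ k) := by
        intro hc
        exact hkG (Finset.mem_filter.2 ⟨Finset.mem_Icc.2 ⟨hj.1, hj.2⟩, hc⟩)
      have hfz : aeval τ (∏ k0 ∈ Finset.Icc 1 r, fallP (xP k0) (lam k0)) = 0 := by
        rw [map_prod]
        apply Finset.prod_eq_zero (Finset.mem_Icc.2 ⟨hk1, hkr⟩)
        unfold fallP
        rw [map_prod]
        apply Finset.prod_eq_zero
          (Finset.mem_Icc.2 ⟨by omega, (by omega : mu (σ k) + 1 ≤ lam k)⟩)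
        rw [map_sub, e1, e2, vS_a n s mu hj.1 hj.2, sub_self]
      rw [hfz, zero_mul, zero_mul]
    · -- σ k is the a_1 slot
      have hfz : aeval τ (∏ k0 ∈ Finset.Icc 1 r, fallP (xP k0) (lam k0)) = 0 := by
        rw [map_prod]
        apply Finset.prod_eq_zero (Finset.mem_Icc.2 ⟨hk1, hkr⟩)
        unfold fallP
        rw [map_prod]
        apply Finset.prod_eq_zero (Finset.mem_Icc.2 ⟨le_rfl, hlk1⟩)
        rw [map_sub, e1, e2, hj.1, vS_a1 n s mu hj.2, sub_self]
      rw [hfz, zero_mul, zero_mul]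
    · -- σ k is a fresh slot
      obtain ⟨j', hq', hn', hne', hsum⟩ := pair_exists n s mu hsn hj.1 hj.2
      have hqge := qq_ge n s
      obtain ⟨k', hk'1, hk'n, hσk'⟩ := hsurj j' (by omega) hn'
      have hkk' : k ≠ k' := by
        intro he
        exact hne' (by rw [← hσk', ← he])
      have hBz : aeval τ (∏ p ∈ Finset.univ.filter
          (fun p : Fin n × Fin n => p.1 < p.2 ∧ (p.1 : ℕ) + 1 ≤ r),
          (xP ((p.1 : ℕ) + 1) + xP ((p.2 : ℕ) + 1))) = 0 := by
        rw [map_prod]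
        set m1 := min k k' with hm1
        set m2 := max k k' with hm2
        have hb1 : 1 ≤ m1 := by omega
        have hb2 : m2 ≤ n := by omega
        have hltm : m1 < m2 := by omega
        have hm1r : m1 ≤ r := by omega
        refine Finset.prod_eq_zero
          (i := ((⟨m1 - 1, by omega⟩ : Fin n), (⟨m2 - 1, by omega⟩ : Fin n))) ?_ ?_
        · simp only [Finset.mem_filter, Finset.mem_univ, true_and]
          refine ⟨?_, ?_⟩
          · show (⟨m1 - 1, by omega⟩ : Fin n) < (⟨m2 - 1, by omega⟩ : Fin n)
            rw [Fin.mk_lt_mk]; omega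
          · show (m1 - 1) + 1 ≤ r
            omega
        · show aeval τ (xP ((m1 - 1) + 1) + xP ((m2 - 1) + 1)) = 0
          have em1 : m1 - 1 + 1 = m1 := by omega
          have em2 : m2 - 1 + 1 = m2 := by omega
          rw [em1, em2, map_add, e1, e1]
          rcases Nat.lt_or_ge k k' with hlt' | hge
          · have g1 : m1 = k := by omega
            have g2 : m2 = k' := by omega
            rw [g1, g2, hσk']
            exact hsum
          · have g1 : m1 = k' := by omega
            have g2 : m2 = k := by omega
            rw [g1, g2, hσk', add_comm]
            exact hsum
      rw [hBz, mul_zero, zero_mul]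

-- ψ (numP) = 0
lemma numP_zero (n r s : ℕ) (hrn : r ≤ n) (hsn : s ≤ n) (lam mu : ℕ → ℕ)
    (hlam : IsStrict r lam) (hmu : IsStrict s mu)
    (h : ¬ ∀ i, 1 ≤ i → lam i ≤ mu i) :
    aeval (Sum.elim (vS n s mu) aP) (numP n r lam) = 0 := by
  unfold numP
  rw [map_sum]
  apply Finset.sum_eq_zero
  intro w _
  rw [map_mul]
  apply mul_eq_zero_of_right
  rw [aeval_rename]
  have hcomp : (Sum.elim (vS n s mu) aP) ∘ (Sum.map (permNat n w) id)
      = Sum.elim (fun k => vS n s mu (permNat n w k)) aP := by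
    funext x; cases x <;> rfl
  rw [hcomp]
  refine gP_zero n r s hrn hsn lam mu hlam hmu h (permNat n w) ?_ ?_ ?_
  · intro k h1 h2; exact permNat_bound n w h1 h2
  · intro k k' h1 h2 h1' h2' he
    have := permNat_inv n w h1 h2
    have := permNat_inv n w h1' h2'
    rw [he] at *
    omega
  · intro j h1 h2
    refine ⟨permNat n w⁻¹ j, (permNat_bound n w⁻¹ h1 h2).1,
      (permNat_bound n w⁻¹ h1 h2).2, ?_⟩
    have := permNat_inv n w⁻¹ h1 h2
    rwa [inv_inv] at this

-- ψ (deltaP) ≠ 0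
lemma deltaP_ne (n s : ℕ) (hsn : s ≤ n) (mu : ℕ → ℕ) (hmu : IsStrict s mu) :
    aeval (Sum.elim (vS n s mu) aP) (deltaP n) ≠ 0 := by
  unfold deltaP
  rw [map_prod]
  rw [Finset.prod_ne_zero_iff]
  intro p hp
  rw [Finset.mem_filter] at hp
  have hlt : (p.1 : ℕ) < (p.2 : ℕ) := hp.2
  rw [map_sub]
  have e1 : ∀ m : ℕ, aeval (Sum.elim (vS n s mu) aP) (xP m) = vS n s mu m := by
    intro m; simp [xP]
  rw [e1, e1, sub_ne_zero]
  exact vS_ne mu hsn hmu (by omega) (by omega) (p.2.isLt)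

-- composing with setting the x's to zero recovers aTupleP
lemma comp_eq (n s : ℕ) (hsn : s ≤ n) (mu : ℕ → ℕ) (f : MvPolynomial (ℕ ⊕ ℕ) ℤ) :
    aeval (Sum.elim (aTupleP n s mu) aP) f
      = aeval (Sum.elim (fun _ : ℕ => (0 : MvPolynomial (ℕ ⊕ ℕ) ℤ)) aP)
          (aeval (Sum.elim (vS n s mu) aP) f) := by
  have key : (aeval (Sum.elim (fun _ : ℕ => (0 : MvPolynomial (ℕ ⊕ ℕ) ℤ)) aP) :
        MvPolynomial (ℕ ⊕ ℕ) ℤ →ₐ[ℤ] MvPolynomial (ℕ ⊕ ℕ) ℤ).comp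
        (aeval (Sum.elim (vS n s mu) aP))
      = aeval (Sum.elim (aTupleP n s mu) aP) := by
    apply MvPolynomial.algHom_ext
    intro v
    cases v with
    | inr m => simp [aP]
    | inl k =>
      simp only [AlgHom.comp_apply, aeval_X, Sum.elim_inl]
      unfold vS aTupleP
      split_ifs with h1 h2 h3 h4 <;> simp [aP, xP]
  exact (congrArg (fun g => g f) key).symm


/-- vanishing property. For strict partitions `λ` (with `r`
parts) and `μ` (with `s` parts), both with at most `n` parts,
`P_λ^{(n)}(a_μ | a) = 0` unless `λ_i ≤ μ_i` for all `i`. -/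
theorem stmt15 (n r s : ℕ) (hrn : r ≤ n) (hsn : s ≤ n)
    (lam mu : ℕ → ℕ) (hlam : IsStrict r lam) (hmu : IsStrict s mu)
    (h : ¬ ∀ i, 1 ≤ i → lam i ≤ mu i)
    (P : MvPolynomial (ℕ ⊕ ℕ) ℤ) (hP : IsP n r lam P) :
    aeval (Sum.elim (aTupleP n s mu) aP) P = 0 := by
  have key := numP_zero n r s hrn hsn lam mu hlam hmu h
  have hdel := deltaP_ne n s hsn mu hmu
  have hP' : ((n - r).factorial : MvPolynomial (ℕ ⊕ ℕ) ℤ) * (deltaP n * P)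
      = numP n r lam := hP
  have h2 := congrArg (aeval (Sum.elim (vS n s mu) aP)) hP'
  rw [map_mul, map_mul, key, map_natCast] at h2
  have hfac : (((n - r).factorial : ℕ) : MvPolynomial (ℕ ⊕ ℕ) ℤ) ≠ 0 :=
    Nat.cast_ne_zero.mpr (Nat.factorial_ne_zero _)
  have hpsiP : aeval (Sum.elim (vS n s mu) aP) P = 0 := by
    rcases mul_eq_zero.mp h2 with hc | hc
    · exact absurd hc hfac
    · rcases mul_eq_zero.mp hc with hc' | hc'
      · exact absurd hc' hdel
      · exact hc'
  rw [comp_eq n s hsn mu P, hpsiP, map_zero]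
end
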